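/- arXiv:1010.1113 — 7 statements merged into one kernel-verified Lean document; each statement's English description precedes it below -/
import Mathlib

section
/- If G is a bipartite graph on n vertices with permanental polynomial per(xI − A(G)) = ∑_{k=0}^n b_k x^{n−k}, then b_{2k+1} = 0 for all k ≥ 0 and b_{2k} ≥ 0 for all k ≥ 0. -/
/-!
Let `p(x) = per(xI - A)`. A 2-colouring `c` of `G` gives the sign matrix `D = diag((-1)^{c v})`
with `D A D = -A`, and `per(D M D) = (∏ D)^2 per M = per M`; hence `p(x) = per(xI + A)`.
Every entry of `xI + A` has nonnegative coefficients, so `p` does too. Moreover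
`p(-x) = per(-(xI + A)) = (-1)^n p(x)`, so the coefficient of `x^j` vanishes unless `j ≡ n (mod 2)`.
-/

open Polynomial Matrix Finset

namespace Polynomial

variable {R : Type*}

variable (R) in
def nonnegCoeffs [CommSemiring R] [PartialOrder R] [IsOrderedRing R] : Subsemiring R[X] where
  carrier := {p | ∀ k, 0 ≤ p.coeff k}
  zero_mem' _ := by simp
  one_mem' k := by rw [coeff_one]; split <;> simp
  add_mem' hp hq k := by rw [coeff_add]; exact add_nonneg (hp k) (hq k)
  mul_mem' hp hq k := by
    rw [coeff_mul]
    exact sum_nonneg fun x _ => mul_nonneg (hp _) (hq _)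

theorem coeff_eq_zero_of_comp_neg_X_eq [CommRing R] [NoZeroDivisors R] [CharZero R] {p : R[X]}
    {n j : ℕ} (hp : p.comp (-X) = (-1) ^ n * p) (hj : Odd (n + j)) : p.coeff j = 0 := by
  have h := congrArg (coeff · j) hp
  have hneg : (-X : R[X]) = C (-1) * X := by simp
  have hc : ((-1 : R[X]) ^ n * p).coeff j = (-1) ^ n * p.coeff j := by
    rw [← C_1, ← C_neg, ← C_pow, coeff_C_mul]
  simp only [hneg, comp_C_mul_X_coeff, hc] at h
  rw [← CharZero.eq_neg_self_iff]
  calc p.coeff j = p.coeff j * (-1) ^ j * (-1) ^ j := by rw [mul_assoc, ← mul_pow]; simp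
    _ = (-1) ^ (n + j) * p.coeff j := by rw [h, pow_add]; ring
    _ = -p.coeff j := by rw [hj.neg_one_pow]; ring

end Polynomial

namespace Matrix

variable {n R S : Type*} [Fintype n] [DecidableEq n]

theorem _root_.RingHom.map_permanent [CommSemiring R] [CommSemiring S] (f : R →+* S)
    (M : Matrix n n R) : f M.permanent = (M.map f).permanent := by
  simp [permanent, map_sum, map_prod]

theorem permanent_mem_of_forall_mem [CommSemiring R] {S : Subsemiring R} {M : Matrix n n R}
    (hM : ∀ i j, M i j ∈ S) : M.permanent ∈ S :=
  sum_mem fun _ _ => prod_mem fun _ _ => hM _ _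

theorem permanent_neg [CommRing R] (M : Matrix n n R) :
    (-M).permanent = (-1) ^ Fintype.card n * M.permanent := by
  rw [← neg_one_smul R M, permanent_smul]

theorem permanent_diagonal_mul_mul_diagonal [CommSemiring R] (d e : n → R) (M : Matrix n n R) :
    (diagonal d * M * diagonal e).permanent = (∏ i, d i) * (∏ i, e i) * M.permanent := by
  simp only [permanent, mul_diagonal, diagonal_mul, mul_sum, prod_mul_distrib]
  refine sum_congr rfl fun σ _ => ?_
  rw [Equiv.prod_comp σ d]
  ring

theorem permanent_charmatrix_comp_neg_X [CommRing R] (A : Matrix n n R) :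
    (charmatrix A).permanent.comp (-X) = (-1) ^ Fintype.card n * (charmatrix (-A)).permanent := by
  have hmap : (charmatrix A).map (compRingHom (-X)) = -charmatrix (-A) := by
    ext i j : 1
    rcases eq_or_ne i j with rfl | h
    · simp only [map_apply, coe_compRingHom_apply, charmatrix_apply_eq, sub_comp, X_comp, C_comp,
        Matrix.neg_apply, map_neg]
      ring
    · simp [charmatrix_apply_ne _ _ _ h]
  rw [← coe_compRingHom_apply, RingHom.map_permanent, hmap, permanent_neg]

theorem charmatrix_diagonal_mul_mul_diagonal [CommRing R] {s : n → R} (hs : ∀ i, s i * s i = 1)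
    (A : Matrix n n R) :
    charmatrix (diagonal s * A * diagonal s) =
      diagonal (fun i => (C (s i) : R[X])) * charmatrix A * diagonal (fun i => C (s i)) := by
  ext i j : 1
  rcases eq_or_ne i j with rfl | h
  · simp only [mul_diagonal, diagonal_mul, charmatrix_apply_eq, C_mul]
    have hC : C (s i) * C (s i) = (1 : R[X]) := by rw [← C_mul, hs, C_1]
    linear_combination (-X) * hC
  · simp [charmatrix_apply_ne _ _ _ h, C_mul]

theorem permanent_charmatrix_diagonal_mul_mul_diagonal [CommRing R] {s : n → R}
    (hs : ∀ i, s i * s i = 1) (A : Matrix n n R) :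
    (charmatrix (diagonal s * A * diagonal s)).permanent = (charmatrix A).permanent := by
  rw [charmatrix_diagonal_mul_mul_diagonal hs, permanent_diagonal_mul_mul_diagonal,
    ← prod_mul_distrib]
  simp [← C_mul, hs]

section OrderedRing

variable [CommRing R] [PartialOrder R] [IsOrderedRing R] {A : Matrix n n R}

theorem coeff_charmatrix_neg_nonneg (hA : ∀ i j, 0 ≤ A i j) (i j : n) (k : ℕ) :
    0 ≤ (charmatrix (-A) i j).coeff k := by
  rcases eq_or_ne i j with rfl | h
  · rw [charmatrix_apply_eq, Matrix.neg_apply, map_neg, sub_neg_eq_add, coeff_add, coeff_X, coeff_C]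
    refine add_nonneg ?_ ?_ <;> split_ifs
    exacts [zero_le_one, le_rfl, hA i i, le_rfl]
  · rw [charmatrix_apply_ne _ _ _ h, Matrix.neg_apply, map_neg, neg_neg, coeff_C]
    split_ifs
    exacts [hA i j, le_rfl]

theorem coeff_permanent_charmatrix_neg_nonneg (hA : ∀ i j, 0 ≤ A i j) (k : ℕ) :
    0 ≤ (charmatrix (-A)).permanent.coeff k :=
  permanent_mem_of_forall_mem (S := nonnegCoeffs R)
    (fun i j _ => coeff_charmatrix_neg_nonneg hA i j _) k

end OrderedRing

end Matrix

namespace SimpleGraph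

variable {V R : Type*} [Fintype V] [DecidableEq V] {G : SimpleGraph V} [DecidableRel G.Adj]

theorem Coloring.diagonal_mul_adjMatrix_mul_diagonal [Ring R] (c : G.Coloring (Fin 2)) :
    diagonal (fun v => (-1 : R) ^ (c v : ℕ)) * G.adjMatrix R *
      diagonal (fun v => (-1) ^ (c v : ℕ)) = -G.adjMatrix R := by
  ext v w
  simp only [mul_diagonal, diagonal_mul, Matrix.neg_apply, adjMatrix_apply]
  split_ifs with h
  · have hvw := c.valid h
    generalize c v = a, c w = b at hvw ⊢
    fin_cases a <;> fin_cases b <;> simp_all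
  · simp

theorem permanent_charmatrix_neg_adjMatrix [CommRing R] (hG : G.Colorable 2) :
    (charmatrix (-G.adjMatrix R)).permanent = (charmatrix (G.adjMatrix R)).permanent := by
  obtain ⟨c⟩ := hG
  rw [← c.diagonal_mul_adjMatrix_mul_diagonal, permanent_charmatrix_diagonal_mul_mul_diagonal]
  intro v
  rw [← mul_pow]
  simp

end SimpleGraph

theorem stmt_6 {V : Type*} [Fintype V] [DecidableEq V] (G : SimpleGraph V)
    [DecidableRel G.Adj] (hbip : G.Colorable 2) :
    (∀ k : ℕ, 2 * k + 1 ≤ Fintype.card V →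
        (Matrix.permanent (G.adjMatrix ℤ).charmatrix).coeff (Fintype.card V - (2 * k + 1)) = 0)
    ∧ (∀ k : ℕ, 2 * k ≤ Fintype.card V →
        0 ≤ (Matrix.permanent (G.adjMatrix ℤ).charmatrix).coeff (Fintype.card V - 2 * k)) := by
  have hsym := G.permanent_charmatrix_neg_adjMatrix (R := ℤ) hbip
  have hcomp : (charmatrix (G.adjMatrix ℤ)).permanent.comp (-X) =
      (-1) ^ Fintype.card V * (charmatrix (G.adjMatrix ℤ)).permanent := by
    rw [permanent_charmatrix_comp_neg_X, hsym]
  have hadj_nonneg : ∀ v w, 0 ≤ G.adjMatrix ℤ v w := fun v w => by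
    rw [SimpleGraph.adjMatrix_apply]
    split_ifs <;> simp
  refine ⟨fun k hk => coeff_eq_zero_of_comp_neg_X_eq hcomp ⟨Fintype.card V - (k + 1), by omega⟩,
    fun k _ => ?_⟩
  rw [← hsym]
  exact coeff_permanent_charmatrix_neg_nonneg hadj_nonneg _
end

section
/- Let G be a bipartite graph and G^e an orientation of G with skew adjacency matrix A(G^e). Then per(xI − A(G)) = det(xI − A(G^e)) holds if and only if every cycle of G is oddly oriented in G^e. -/
/-- An orientation of a simple graph `G`, encoded by its skew adjacency matrix entries:
`sign u v = 1` if the edge `uv` is directed from `u` to `v`, `-1` if it is directed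
from `v` to `u`, and `0` if `uv` is not an edge. -/
structure SimpleGraph.Orientation {V : Type*} (G : SimpleGraph V) where
  sign : V → V → ℤ
  skew : ∀ u v, sign u v = - sign v u
  adj : ∀ u v, G.Adj u v → sign u v = 1 ∨ sign u v = -1
  not_adj : ∀ u v, ¬ G.Adj u v → sign u v = 0

/-- A closed walk is oddly oriented if an odd number of its edges are directed in
agreement with the traversal direction of the walk. -/
def SimpleGraph.Orientation.OddlyOriented {V : Type*} {G : SimpleGraph V}
    (o : G.Orientation) {v : V} (c : G.Walk v v) : Prop :=
  Odd ((c.darts.filter (fun d => o.sign d.toProd.1 d.toProd.2 = 1)).length)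

/-!
Expand both sides over permutations `σ` of `V`: the `σ`-terms of `per (x I - A)` and
`det (x I - S)`, where `S = A(G^e)`, are integer multiples of `x ^ (n - #σ.support)`, and both
vanish unless `σ` moves every vertex it does not fix to a neighbour. For such `σ` the two
coefficients are `(-1) ^ #σ.support` and `sign σ * ∏ S v (σ v) = ±1`, so their difference is `0`
or `2 * (-1) ^ #σ.support`; differences at the same power of `x` therefore have the same sign and
cannot cancel, and the polynomials agree iff the coefficients agree for every such `σ`.
This condition is multiplicative over disjoint cycles and automatic for a transposition of
an edge. For the cyclic permutation running once around a cycle of `G`, whose length `k` is even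
since `G` is bipartite, `sign σ = -1`, so the condition says `∏ S v (σ v) = -1`, that is, an
odd number of the `k` edges point forward.
-/

open Equiv Finset Polynomial

theorem Polynomial.sum_C_mul_X_pow_eq_zero_iff {R ι : Type*} [CommRing R] [LinearOrder R]
    [IsStrictOrderedRing R] {s : Finset ι} {a : ι → R} {e : ι → ℕ}
    (h : ∀ i ∈ s, ∀ j ∈ s, e i = e j → 0 ≤ a i * a j) :
    ∑ i ∈ s, C (a i) * X ^ e i = 0 ↔ ∀ i ∈ s, a i = 0 := by
  refine ⟨fun hsum i hi => ?_, fun h0 => sum_eq_zero fun i hi => by rw [h0 i hi, C_0, zero_mul]⟩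
  -- `a i` times the coefficient of `X ^ e i` is a sum of nonnegative terms, one being `a i * a i`.
  have hcoeff : ∑ j ∈ s, (if e i = e j then a i * a j else 0) = 0 := by
    have := congrArg (fun p => a i * p.coeff (e i)) hsum
    simpa [finsetSum_coeff, coeff_C_mul, coeff_X_pow, mul_sum, eq_comm] using this
  have hterm := (sum_eq_zero_iff_of_nonneg fun j hj => ?_).mp hcoeff i hi
  · simpa using hterm
  · split_ifs with hij
    exacts [h i hi j hj hij, le_rfl]

theorem Matrix.prod_charmatrix_apply_perm {V R : Type*} [Fintype V] [DecidableEq V] [CommRing R]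
    (M : Matrix V V R) (hM : ∀ i, M i i = 0) (σ : Perm V) :
    ∏ i, M.charmatrix (σ i) i
      = C (∏ i ∈ σ.support, -M (σ i) i) * X ^ (Fintype.card V - #σ.support) := by
  rw [← prod_mul_prod_compl σ.support, map_prod, ← card_compl, ← prod_const]
  congr 1
  · refine prod_congr rfl fun i hi => ?_
    rw [charmatrix_apply_ne _ _ _ (Perm.mem_support.mp hi), map_neg]
  · refine prod_congr rfl fun i hi => ?_
    rw [Perm.notMem_support.mp (mem_compl.mp hi), charmatrix_apply_eq, hM, map_zero, sub_zero]

theorem Equiv.Perm.Disjoint.prod_support_mul {V M : Type*} [Fintype V] [DecidableEq V]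
    [CommMonoid M] {σ τ : Perm V} (h : σ.Disjoint τ) (f : V → V → M) :
    ∏ x ∈ (σ * τ).support, f x ((σ * τ) x)
      = (∏ x ∈ σ.support, f x (σ x)) * ∏ x ∈ τ.support, f x (τ x) := by
  rw [h.support_mul, prod_union h.disjoint_support]
  congr 1 <;> refine prod_congr rfl fun x hx => ?_
  · rw [Perm.mul_apply, Perm.notMem_support.mp ((disjoint_left.mp h.disjoint_support) hx)]
  · rw [h.commute.eq, Perm.mul_apply,
      Perm.notMem_support.mp ((disjoint_right.mp h.disjoint_support) hx)]

theorem List.isChain_iterate {α : Type*} (f : α → α) (a : α) (n : ℕ) :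
    (List.iterate f a n).IsChain fun x y => y = f x := by
  induction n generalizing a with
  | zero => simp
  | succ n ih =>
    rcases n with _ | n
    · simp
    · exact .cons_cons rfl (ih (f a))

namespace SimpleGraph

variable {V : Type*} {G : SimpleGraph V}

theorem Walk.even_length_of_colorable_two (hG : G.Colorable 2) {u : V} (p : G.Walk u u) :
    Even p.length := by
  obtain ⟨c⟩ := hG
  exact ((G.recolorOfEquiv finTwoEquiv c).even_length_iff_congr p).mpr Iff.rfl

def IsAdjPerm (G : SimpleGraph V) (σ : Perm V) : Prop :=
  ∀ x, σ x ≠ x → G.Adj x (σ x)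

theorem not_isAdjPerm_iff {σ : Perm V} :
    ¬ G.IsAdjPerm σ ↔ ∃ x, σ x ≠ x ∧ ¬ G.Adj x (σ x) := by
  simp [IsAdjPerm]

theorem IsAdjPerm.of_disjoint_mul_left {σ τ : Perm V} (h : σ.Disjoint τ)
    (hστ : G.IsAdjPerm (σ * τ)) : G.IsAdjPerm σ := fun x hx => by
  have hτx : τ x = x := (h x).resolve_left hx
  have := hστ x (by rwa [Perm.mul_apply, hτx])
  rwa [Perm.mul_apply, hτx] at this

theorem IsAdjPerm.of_disjoint_mul_right {σ τ : Perm V} (h : σ.Disjoint τ)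
    (hστ : G.IsAdjPerm (σ * τ)) : G.IsAdjPerm τ :=
  of_disjoint_mul_left h.symm (h.commute.eq ▸ hστ)

section AdjMatrix

variable [Fintype V] [DecidableEq V] [DecidableRel G.Adj] {σ : Perm V}

theorem prod_neg_adjMatrix_of_isAdjPerm (h : G.IsAdjPerm σ) :
    ∏ x ∈ σ.support, -G.adjMatrix ℤ (σ x) x = (-1) ^ #σ.support :=
  prod_const (-1 : ℤ) ▸ prod_congr rfl fun x hx => by
    rw [adjMatrix_apply, if_pos (h x (Perm.mem_support.mp hx)).symm]

theorem prod_neg_adjMatrix_of_not_isAdjPerm (h : ¬ G.IsAdjPerm σ) :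
    ∏ x ∈ σ.support, -G.adjMatrix ℤ (σ x) x = 0 := by
  obtain ⟨x, hx, hnadj⟩ := not_isAdjPerm_iff.mp h
  exact prod_eq_zero (Perm.mem_support.mpr hx) (by simp [adjMatrix_apply, G.adj_comm, hnadj])

theorem permanent_charmatrix_adjMatrix :
    (G.adjMatrix ℤ).charmatrix.permanent = ∑ σ : Perm V,
      C (∏ x ∈ σ.support, -G.adjMatrix ℤ (σ x) x) * X ^ (Fintype.card V - #σ.support) :=
  sum_congr rfl fun σ _ => (G.adjMatrix ℤ).prod_charmatrix_apply_perm (by simp) σ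

end AdjMatrix

namespace Orientation

variable (o : G.Orientation)

theorem sign_self (v : V) : o.sign v v = 0 :=
  o.not_adj v v (G.irrefl)

variable [Fintype V] [DecidableEq V]

def detCoeff (σ : Perm V) : ℤ :=
  Perm.sign σ * ∏ x ∈ σ.support, o.sign x (σ x)

theorem charpoly_eq_sum_detCoeff :
    (Matrix.of o.sign).charpoly
      = ∑ σ : Perm V, C (o.detCoeff σ) * X ^ (Fintype.card V - #σ.support) := by
  rw [Matrix.charpoly, Matrix.det_apply]
  refine sum_congr rfl fun σ _ => ?_
  rw [(Matrix.of o.sign).prod_charmatrix_apply_perm o.sign_self, Units.smul_def, zsmul_eq_mul,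
    ← mul_assoc, ← C_eq_intCast, ← C_mul, detCoeff]
  congr 3
  exact prod_congr rfl fun x _ => by rw [Matrix.of_apply, o.skew, neg_neg]

theorem detCoeff_of_not_isAdjPerm {σ : Perm V} (h : ¬ G.IsAdjPerm σ) : o.detCoeff σ = 0 := by
  obtain ⟨x, hx, hnadj⟩ := not_isAdjPerm_iff.mp h
  exact mul_eq_zero_of_right _ (prod_eq_zero (Perm.mem_support.mpr hx) (o.not_adj _ _ hnadj))

theorem detCoeff_eq_one_or_neg_one {σ : Perm V} (h : G.IsAdjPerm σ) :
    o.detCoeff σ = 1 ∨ o.detCoeff σ = -1 := by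
  rw [← Int.isUnit_iff, detCoeff]
  refine (Perm.sign σ).isUnit.map (Int.castRingHom ℤ) |>.mul ?_
  refine prod_induction _ IsUnit (fun _ _ => IsUnit.mul) isUnit_one fun x hx => ?_
  rcases o.adj x (σ x) (h x (Perm.mem_support.mp hx)) with hs | hs <;> simp [hs]

theorem detCoeff_mul_of_disjoint {σ τ : Perm V} (h : σ.Disjoint τ) :
    o.detCoeff (σ * τ) = o.detCoeff σ * o.detCoeff τ := by
  rw [detCoeff, detCoeff, detCoeff, h.prod_support_mul, Perm.sign_mul, Units.val_mul]
  ring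

theorem detCoeff_swap {a b : V} (hab : G.Adj a b) : o.detCoeff (swap a b) = 1 := by
  rw [detCoeff, Perm.sign_swap hab.ne, Perm.support_swap hab.ne, prod_pair hab.ne, swap_apply_left,
    swap_apply_right, o.skew b a]
  rcases o.adj a b hab with hs | hs <;> simp [hs]

theorem forall_isAdjPerm_detCoeff_of_forall_isCycle
    (h : ∀ σ : Perm V, σ.IsCycle → 3 ≤ #σ.support → G.IsAdjPerm σ →
      o.detCoeff σ = (-1) ^ #σ.support) (σ : Perm V) (hσ : G.IsAdjPerm σ) :
    o.detCoeff σ = (-1) ^ #σ.support := by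
  induction σ using Perm.cycle_induction_on with
  | base_one => simp [detCoeff]
  | base_cycles σ hcyc =>
    obtain h2 | h3 : #σ.support = 2 ∨ 3 ≤ #σ.support := by
      have := hcyc.two_le_card_support
      omega
    · obtain ⟨a, b, hab, rfl⟩ := Perm.card_support_eq_two.mp h2
      have hadj : G.Adj a b := by simpa using hσ a (by simpa using hab.symm)
      rw [o.detCoeff_swap hadj, h2]
      norm_num
    · exact h σ hcyc h3 hσ
  | induction_disjoint σ τ hdisj _ hσ' hτ' =>
    rw [o.detCoeff_mul_of_disjoint hdisj, hdisj.card_support_mul, pow_add,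
      hσ' (hσ.of_disjoint_mul_left hdisj), hτ' (hσ.of_disjoint_mul_right hdisj)]

variable [DecidableRel G.Adj]

theorem prod_neg_adjMatrix_sub_detCoeff_eq_zero_or (σ : Perm V) :
    ∏ x ∈ σ.support, -G.adjMatrix ℤ (σ x) x - o.detCoeff σ = 0 ∨
      ∏ x ∈ σ.support, -G.adjMatrix ℤ (σ x) x - o.detCoeff σ = 2 * (-1) ^ #σ.support := by
  by_cases h : G.IsAdjPerm σ
  · rw [prod_neg_adjMatrix_of_isAdjPerm h]
    rcases o.detCoeff_eq_one_or_neg_one h with hc | hc <;>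
      rcases neg_one_pow_eq_or ℤ #σ.support with hk | hk <;> simp [hc, hk]
  · rw [prod_neg_adjMatrix_of_not_isAdjPerm h, o.detCoeff_of_not_isAdjPerm h]
    simp

theorem prod_neg_adjMatrix_sub_detCoeff_eq_zero_iff (σ : Perm V) :
    ∏ x ∈ σ.support, -G.adjMatrix ℤ (σ x) x - o.detCoeff σ = 0 ↔
      (G.IsAdjPerm σ → o.detCoeff σ = (-1) ^ #σ.support) := by
  by_cases h : G.IsAdjPerm σ
  · rw [prod_neg_adjMatrix_of_isAdjPerm h, sub_eq_zero, eq_comm]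
    exact (imp_iff_right h).symm
  · rw [prod_neg_adjMatrix_of_not_isAdjPerm h, o.detCoeff_of_not_isAdjPerm h, sub_zero]
    exact iff_of_true rfl (absurd · h)

theorem permanent_charmatrix_adjMatrix_eq_charpoly_iff :
    (G.adjMatrix ℤ).charmatrix.permanent = (Matrix.of o.sign).charpoly ↔
      ∀ σ : Perm V, G.IsAdjPerm σ → o.detCoeff σ = (-1) ^ #σ.support := by
  rw [← sub_eq_zero, permanent_charmatrix_adjMatrix, charpoly_eq_sum_detCoeff, ← sum_sub_distrib]
  simp_rw [← sub_mul, ← C_sub]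
  rw [sum_C_mul_X_pow_eq_zero_iff]
  · simp only [mem_univ, true_imp_iff, prod_neg_adjMatrix_sub_detCoeff_eq_zero_iff]
  · intro σ _ τ _ hστ
    have hcard : #σ.support = #τ.support := by
      have := card_le_univ σ.support
      have := card_le_univ τ.support
      omega
    rcases o.prod_neg_adjMatrix_sub_detCoeff_eq_zero_or σ with h₁ | h₁
    · rw [h₁, zero_mul]
    rcases o.prod_neg_adjMatrix_sub_detCoeff_eq_zero_or τ with h₂ | h₂
    · rw [h₂, mul_zero]
    rw [h₁, h₂, hcard]
    exact mul_self_nonneg _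

end Orientation

end SimpleGraph

namespace SimpleGraph.Walk

variable {V : Type*} {G : SimpleGraph V} {u : V}

theorem rotate_one_dropLast_support (p : G.Walk u u) :
    p.support.dropLast.rotate 1 = p.support.tail := by
  cases p with
  | nil => rfl
  | cons h q =>
    simp [List.dropLast_cons_of_ne_nil q.support_ne_nil]

theorem IsCycle.nodup_support_dropLast {c : G.Walk u u} (hc : c.IsCycle) :
    c.support.dropLast.Nodup :=
  (tail_support_perm_dropLast_support c).nodup_iff.mp (isCycle_def c |>.mp hc).2.2

theorem isCycle_of_nodup_support_dropLast {c : G.Walk u u} (hc : c.support.dropLast.Nodup)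
    (h3 : 3 ≤ c.length) : c.IsCycle := by
  refine isCycle_iff_isPath_tail_and_le_length.mpr ⟨?_, h3⟩
  rw [isPath_def, support_tail_of_not_nil _ (not_nil_iff_lt_length.mpr (by omega))]
  exact (tail_support_perm_dropLast_support c).nodup_iff.mpr hc

variable [DecidableEq V]

def toPerm (c : G.Walk u u) : Perm V :=
  c.support.dropLast.formPerm

theorem toPerm_apply_fst {c : G.Walk u u} (hc : c.support.dropLast.Nodup) {d : G.Dart}
    (hd : d ∈ c.darts) : c.toPerm d.fst = d.snd := by
  obtain ⟨i, hi, rfl⟩ := List.getElem_of_mem hd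
  have hlen : i < c.support.dropLast.length := by rwa [← c.map_fst_darts, List.length_map]
  have hfst : c.support.dropLast[i] = c.darts[i].fst :=
    (List.getElem_of_eq c.map_fst_darts.symm hlen).trans (List.getElem_map _)
  have hsnd : (c.support.dropLast.rotate 1)[i]'(by simpa using hlen) = c.darts[i].snd :=
    (List.getElem_of_eq (c.rotate_one_dropLast_support.trans c.map_snd_darts.symm) _).trans
      (List.getElem_map _)
  rw [← hfst, ← hsnd, toPerm, List.formPerm_apply_getElem _ hc, List.getElem_rotate]

variable {c : G.Walk u u}

theorem IsCycle.isAdjPerm_toPerm (hc : c.IsCycle) : G.IsAdjPerm c.toPerm := fun x hx => by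
  obtain ⟨d, hd, rfl⟩ : ∃ d ∈ c.darts, d.fst = x := by
    simpa [← c.map_fst_darts] using List.mem_of_formPerm_apply_ne hx
  rw [toPerm_apply_fst hc.nodup_support_dropLast hd]
  exact d.adj

theorem IsCycle.isCycle_toPerm (hc : c.IsCycle) : c.toPerm.IsCycle :=
  List.isCycle_formPerm hc.nodup_support_dropLast (by simp; have := hc.three_le_length; omega)

theorem IsCycle.support_toPerm [Fintype V] (hc : c.IsCycle) :
    c.toPerm.support = c.support.dropLast.toFinset :=
  List.support_formPerm_of_nodup _ hc.nodup_support_dropLast fun x hx => by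
    have := congrArg List.length hx
    simp at this
    have := hc.three_le_length
    omega

theorem IsCycle.card_support_toPerm [Fintype V] (hc : c.IsCycle) :
    #c.toPerm.support = c.length := by
  rw [hc.support_toPerm, List.toFinset_card_of_nodup hc.nodup_support_dropLast]
  simp

theorem IsCycle.prod_support_toPerm [Fintype V] {M : Type*} [CommMonoid M] (hc : c.IsCycle)
    (f : V → V → M) :
    ∏ x ∈ c.toPerm.support, f x (c.toPerm x) = (c.darts.map fun d => f d.fst d.snd).prod := by
  rw [hc.support_toPerm, List.prod_toFinset _ hc.nodup_support_dropLast, ← c.map_fst_darts,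
    List.map_map]
  exact congrArg List.prod <| List.map_congr_left fun d hd => by
    simp [toPerm_apply_fst hc.nodup_support_dropLast hd]

end SimpleGraph.Walk

namespace SimpleGraph.Orientation

variable {V : Type*} {G : SimpleGraph V} (o : G.Orientation)

theorem prod_sign_darts_mul_neg_one_pow {u v : V} (p : G.Walk u v) :
    (p.darts.map fun d => o.sign d.fst d.snd).prod *
      (-1) ^ (p.darts.filter fun d => o.sign d.fst d.snd = 1).length = (-1) ^ p.length := by
  induction p with
  | nil => simp
  | @cons u v w h q ih =>
    rcases o.adj u v h with hs | hs
    · rw [Walk.darts_cons, List.filter_cons_of_pos (by simpa using hs)]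
      simp only [List.map_cons, List.prod_cons, List.length_cons, Walk.length_cons, pow_succ, hs]
      linear_combination -ih
    · rw [Walk.darts_cons, List.filter_cons_of_neg (by simp [hs])]
      simp only [List.map_cons, List.prod_cons, Walk.length_cons, pow_succ, hs]
      linear_combination -ih

variable [Fintype V] [DecidableEq V]

theorem detCoeff_toPerm_eq_neg_one_pow_iff (hG : G.Colorable 2) {u : V} {c : G.Walk u u}
    (hc : c.IsCycle) : o.detCoeff c.toPerm = (-1) ^ #c.toPerm.support ↔ o.OddlyOriented c := by
  set F := (c.darts.filter fun d => o.sign d.fst d.snd = 1).length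
  have heven : (-1 : ℤ) ^ c.length = 1 := (c.even_length_of_colorable_two hG).neg_one_pow
  have hprod : (c.darts.map fun d => o.sign d.fst d.snd).prod = (-1) ^ F := by
    have h := o.prod_sign_darts_mul_neg_one_pow c
    rw [heven] at h
    calc _ = (c.darts.map fun d => o.sign d.fst d.snd).prod * ((-1) ^ F * (-1) ^ F) := by
          rw [← pow_add, ← two_mul, pow_mul]; norm_num
      _ = (-1) ^ F := by rw [← mul_assoc, h, one_mul]
  rw [detCoeff, hc.isCycle_toPerm.sign, hc.prod_support_toPerm, hprod, hc.card_support_toPerm]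
  push_cast
  rw [heven]
  change _ ↔ Odd F
  rcases Nat.even_or_odd F with hF | hF
  · simp [hF.neg_one_pow, Nat.not_odd_iff_even.mpr hF]
  · simp [hF.neg_one_pow, hF]

end SimpleGraph.Orientation

namespace SimpleGraph

variable {V : Type*} {G : SimpleGraph V} [Fintype V] [DecidableEq V]

theorem IsAdjPerm.exists_isCycle_toPerm_eq {σ : Perm V} (hadj : G.IsAdjPerm σ)
    (hσ : σ.IsCycle) (h3 : 3 ≤ #σ.support) :
    ∃ (u : V) (c : G.Walk u u), c.IsCycle ∧ c.toPerm = σ := by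
  obtain ⟨a, ha⟩ := hσ.nonempty_support
  have hcycleOf : σ.cycleOf a = σ := hσ.cycleOf_eq (Perm.mem_support.mp ha)
  have hl : List.iterate σ a (#σ.support + 1) = σ.toList a ++ [a] := by
    have hpow : (σ ^ #σ.support) a = a := by
      rw [← hσ.orderOf, pow_orderOf_eq_one, Perm.one_apply]
    rw [List.iterate_add, Perm.toList, hcycleOf, Perm.iterate_eq_pow, hpow]
    rfl
  have hchain : (List.iterate σ a (#σ.support + 1)).IsChain G.Adj :=
    (List.isChain_iterate σ a _).imp_of_mem_imp fun x y hx _ hxy => by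
      obtain ⟨m, -, rfl⟩ := List.mem_iterate.mp hx
      rw [hxy, Perm.iterate_eq_pow]
      exact hadj _ (Perm.mem_support.mp (Perm.pow_apply_mem_support.mpr ha))
  have hne : List.iterate σ a (#σ.support + 1) ≠ [] := by simp
  have hdrop : (Walk.ofSupport _ hne hchain).support.dropLast = σ.toList a := by
    rw [Walk.support_ofSupport, hl, List.dropLast_concat]
  have hhead : (List.iterate σ a (#σ.support + 1)).head hne = a := rfl
  have hlast : (List.iterate σ a (#σ.support + 1)).getLast hne = a := by simp only [hl]; simp
  refine ⟨a, (Walk.ofSupport _ hne hchain).copy hhead hlast, ?_, ?_⟩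
  · refine Walk.isCycle_of_nodup_support_dropLast ?_ ?_
    · rw [Walk.support_copy, hdrop]
      exact σ.nodup_toList a
    · rwa [Walk.length_copy, Walk.length_ofSupport, List.length_iterate, Nat.add_sub_cancel]
  · rw [Walk.toPerm, Walk.support_copy, hdrop, Perm.formPerm_toList, hcycleOf]

end SimpleGraph

theorem stmt_8 {V : Type*} [Fintype V] [DecidableEq V] (G : SimpleGraph V)
    [DecidableRel G.Adj] (hbip : G.Colorable 2) (o : G.Orientation) :
    Matrix.permanent (G.adjMatrix ℤ).charmatrix = Matrix.charpoly (Matrix.of o.sign)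
      ↔ ∀ (v : V) (c : G.Walk v v), c.IsCycle → o.OddlyOriented c := by
  rw [o.permanent_charmatrix_adjMatrix_eq_charpoly_iff]
  constructor
  · intro h v c hc
    exact (o.detCoeff_toPerm_eq_neg_one_pow_iff hbip hc).mp (h _ hc.isAdjPerm_toPerm)
  · intro h
    refine o.forall_isAdjPerm_detCoeff_of_forall_isCycle fun σ hσ h3 hadj => ?_
    obtain ⟨u, c, hc, rfl⟩ := hadj.exists_isCycle_toPerm_eq hσ h3
    exact (o.detCoeff_toPerm_eq_neg_one_pow_iff hbip hc).mpr (h u c hc)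
end

section
/- Let G be a bipartite graph with an orientation G^e in which every cycle is oddly oriented. Then for every vertex subset S, the induced sub-orientation on the induced subgraph G[S] satisfies per(A(G[S])) = det(A(G^e[S])). -/
open Equiv Finset

namespace Equiv.Perm

variable {α : Type*} [Fintype α] [DecidableEq α]

theorem Disjoint.mul_apply_of_mem_support_left {σ τ : Perm α} (h : σ.Disjoint τ) {i : α}
    (hi : i ∈ σ.support) : (σ * τ) i = σ i := by
  rw [mul_apply, notMem_support.1 (h.mem_imp hi)]

theorem Disjoint.mul_apply_of_mem_support_right {σ τ : Perm α} (h : σ.Disjoint τ) {i : α}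
    (hi : i ∈ τ.support) : (σ * τ) i = τ i := by
  rw [h.commute.eq]
  exact h.symm.mul_apply_of_mem_support_left hi

theorem Disjoint.prod_support_mul_s9 {M : Type*} [CommMonoid M] {σ τ : Perm α}
    (h : σ.Disjoint τ) (g : α → α → M) :
    ∏ i ∈ (σ * τ).support, g i ((σ * τ) i)
      = (∏ i ∈ σ.support, g i (σ i)) * ∏ i ∈ τ.support, g i (τ i) := by
  rw [h.support_mul, prod_union h.disjoint_support]
  congr 1 <;> refine prod_congr rfl fun i hi => ?_
  · rw [h.mul_apply_of_mem_support_left hi]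
  · rw [h.mul_apply_of_mem_support_right hi]

theorem IsCycle.toList_eq_iterate {c : Perm α} (hc : c.IsCycle) {a : α} (ha : a ∈ c.support) :
    c.toList a = List.iterate c a #c.support := by
  rw [toList, hc.cycleOf_eq (mem_support.1 ha)]

theorem IsCycle.nodup_iterate {c : Perm α} (hc : c.IsCycle) {a : α} (ha : a ∈ c.support) :
    (List.iterate c a #c.support).Nodup :=
  hc.toList_eq_iterate ha ▸ nodup_toList c a

theorem IsCycle.prod_support_eq_prod_iterate {M : Type*} [CommMonoid M] {c : Perm α}
    (hc : c.IsCycle) {a : α} (ha : a ∈ c.support) (g : α → M) :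
    ∏ i ∈ c.support, g i = ((List.iterate c a #c.support).map g).prod := by
  rw [← List.prod_toFinset g (hc.nodup_iterate ha), ← hc.toList_eq_iterate ha]
  congr 1
  ext y
  rw [List.mem_toFinset, mem_toList_iff]
  exact ⟨fun hy => ⟨hc.sameCycle (mem_support.1 ha) (mem_support.1 hy), ha⟩,
    fun ⟨hay, _⟩ => hay.mem_support_iff.1 ha⟩

end Equiv.Perm

namespace SimpleGraph

variable {V W : Type*} {G : SimpleGraph V}

namespace Walk

def ofIterate (f : V → V) : (n : ℕ) → (x : V) → (∀ m, G.Adj (f^[m] x) (f^[m + 1] x)) →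
    G.Walk x (f^[n] x)
  | 0, _, _ => nil
  | n + 1, x, h => cons (h 0) (ofIterate f n (f x) fun m => h (m + 1))

variable {f : V → V}

@[simp]
theorem support_ofIterate (n : ℕ) (x : V) (h : ∀ m, G.Adj (f^[m] x) (f^[m + 1] x)) :
    (ofIterate f n x h).support = List.iterate f x (n + 1) := by
  induction n generalizing x with
  | zero => rfl
  | succ n ih => exact congrArg (x :: ·) (ih (f x) _)

@[simp]
theorem length_ofIterate (n : ℕ) (x : V) (h : ∀ m, G.Adj (f^[m] x) (f^[m + 1] x)) :
    (ofIterate f n x h).length = n := by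
  induction n generalizing x with
  | zero => rfl
  | succ n ih => exact congrArg (· + 1) (ih (f x) _)

theorem map_darts_ofIterate {α : Type*} (g : V → V → α) (n : ℕ) (x : V)
    (h : ∀ m, G.Adj (f^[m] x) (f^[m + 1] x)) :
    (ofIterate f n x h).darts.map (fun d => g d.fst d.snd)
      = (List.iterate f x n).map fun y => g y (f y) := by
  induction n generalizing x with
  | zero => rfl
  | succ n ih => exact congrArg (g x (f x) :: ·) (ih (f x) _)

end Walk

namespace Orientation

variable (o : G.Orientation)

def CyclesOddlyOriented : Prop :=
  ∀ (v : V) (c : G.Walk v v), c.IsCycle → o.OddlyOriented c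

theorem prod_map_sign_darts {u v : V} (w : G.Walk u v) :
    (w.darts.map fun d => o.sign d.fst d.snd).prod
      = (-1) ^ (w.length + (w.darts.filter fun d => o.sign d.fst d.snd = 1).length) := by
  induction w with
  | nil => simp
  | cons h p ih =>
    rcases o.adj _ _ h with hs | hs <;> simp [hs, ih] <;> ring

theorem prod_map_sign_darts_eq_neg_one {u : V} {w : G.Walk u u} (hw : o.OddlyOriented w)
    (hlen : Even w.length) : (w.darts.map fun d => o.sign d.fst d.snd).prod = -1 := by
  rw [prod_map_sign_darts]
  exact (hlen.add_odd hw).neg_one_pow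

theorem oddlyOriented_of_length_eq_two {u : V} (w : G.Walk u u) (hw : w.length = 2) :
    o.OddlyOriented w := by
  match w, hw with
  | .cons h (.cons _ .nil), _ =>
    rcases o.adj _ _ h with hs | hs <;> simp [OddlyOriented, hs, o.skew _ u]

def comap (f : W → V) : (G.comap f).Orientation where
  sign u v := o.sign (f u) (f v)
  skew _ _ := o.skew _ _
  adj _ _ := o.adj _ _
  not_adj _ _ := o.not_adj _ _

theorem oddlyOriented_comap_iff (f : W → V) {u : W} (w : (G.comap f).Walk u u) :
    (o.comap f).OddlyOriented w ↔ o.OddlyOriented (w.map (Hom.comap f G)) := by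
  simp only [OddlyOriented, Walk.darts_map, List.filter_map, List.length_map]
  rfl

theorem CyclesOddlyOriented.comap {o : G.Orientation} (ho : o.CyclesOddlyOriented) {f : W → V}
    (hf : Function.Injective f) : (o.comap f).CyclesOddlyOriented := fun _ c hc =>
  (o.oddlyOriented_comap_iff f c).2 (ho _ _ (hc.map hf))

section Permutations

open Walk

variable [Fintype V] [DecidableEq V]

theorem sign_mul_prod_sign_eq_one_of_isCycle (hbip : G.Colorable 2)
    (hodd : o.CyclesOddlyOriented) {c : Perm V} (hc : c.IsCycle)
    (hadj : ∀ i ∈ c.support, G.Adj i (c i)) :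
    (Perm.sign c : ℤ) * ∏ i ∈ c.support, o.sign i (c i) = 1 := by
  obtain ⟨a, ha, -⟩ := id hc
  rw [← Perm.mem_support] at ha
  have hstep : ∀ m, G.Adj (c^[m] a) (c^[m + 1] a) := fun m => by
    rw [Function.iterate_succ_apply']
    exact hadj _ (Perm.pow_apply_mem_support.2 ha)
  obtain ⟨n, hn⟩ : ∃ n, #c.support = n + 1 :=
    ⟨_, (Nat.sub_add_cancel (one_le_two.trans hc.two_le_card_support)).symm⟩
  have hper : c^[n + 1] a = a := by
    rw [← hn, Perm.iterate_eq_pow, ← hc.orderOf, pow_orderOf_eq_one, Perm.one_apply]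
  let w : G.Walk a a := (ofIterate c (n + 1) a hstep).copy rfl hper
  have hlen : w.length = #c.support := by rw [length_copy, length_ofIterate, hn]
  have hprod :
      ∏ i ∈ c.support, o.sign i (c i) = (w.darts.map fun d => o.sign d.fst d.snd).prod := by
    rw [hc.prod_support_eq_prod_iterate ha, darts_copy, map_darts_ofIterate, hn]
  have hw : o.OddlyOriented w := by
    rcases hc.two_le_card_support.eq_or_lt with h2 | h3
    -- a transposition walks along an edge and back, which is not a graph cycle
    · exact o.oddlyOriented_of_length_eq_two w (hlen.trans h2.symm)
    refine hodd _ _ (isCycle_iff_isPath_tail_and_le_length.2 ⟨?_, hlen ▸ h3⟩)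
    rw [isPath_def, support_tail_of_not_nil _ (not_nil_iff_lt_length.2 (by omega)), support_copy,
      support_ofIterate]
    exact hn ▸ hc.nodup_iterate (Perm.apply_mem_support.2 ha)
  have heven : Even #c.support := hlen ▸ two_colorable_iff_forall_loop_even.1 hbip a w
  rw [hc.sign, hprod, o.prod_map_sign_darts_eq_neg_one hw (hlen ▸ heven), heven.neg_one_pow]
  norm_num

theorem sign_mul_prod_sign_eq_one (hbip : G.Colorable 2) (hodd : o.CyclesOddlyOriented)
    (σ : Perm V) (hadj : ∀ i ∈ σ.support, G.Adj i (σ i)) :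
    (Perm.sign σ : ℤ) * ∏ i ∈ σ.support, o.sign i (σ i) = 1 := by
  induction σ using Perm.cycle_induction_on with
  | base_one => simp
  | base_cycles c hc => exact o.sign_mul_prod_sign_eq_one_of_isCycle hbip hodd hc hadj
  | induction_disjoint σ τ hd _ ihσ ihτ =>
    have hσ : ∀ i ∈ σ.support, G.Adj i (σ i) := fun i hi => by
      simpa [hd.mul_apply_of_mem_support_left hi] using
        hadj i (hd.support_mul ▸ mem_union_left _ hi)
    have hτ : ∀ i ∈ τ.support, G.Adj i (τ i) := fun i hi => by
      simpa [hd.mul_apply_of_mem_support_right hi] using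
        hadj i (hd.support_mul ▸ mem_union_right _ hi)
    rw [hd.prod_support_mul_s9, map_mul, Units.val_mul]
    linear_combination (Perm.sign τ * ∏ i ∈ τ.support, o.sign i (τ i) : ℤ) * ihσ hσ + ihτ hτ

theorem permanent_adjMatrix_eq_det [DecidableRel G.Adj] (hbip : G.Colorable 2)
    (hodd : o.CyclesOddlyOriented) : (G.adjMatrix ℤ).permanent = (Matrix.of o.sign).det := by
  rw [← Matrix.permanent_transpose, ← Matrix.det_transpose, Matrix.permanent, Matrix.det_apply]
  refine sum_congr rfl fun σ _ => ?_
  simp only [Matrix.transpose_apply, Matrix.of_apply, adjMatrix_apply]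
  by_cases hσ : ∀ i, G.Adj i (σ i)
  · have hsupp : σ.support = univ := eq_univ_of_forall fun i => Perm.mem_support.2 (hσ i).ne'
    rw [prod_eq_one fun i _ => if_pos (hσ i), Units.smul_def, smul_eq_mul, ← hsupp,
      o.sign_mul_prod_sign_eq_one hbip hodd σ fun i _ => hσ i]
  · push Not at hσ
    obtain ⟨i, hi⟩ := hσ
    rw [prod_eq_zero (mem_univ i) (if_neg hi), prod_eq_zero (mem_univ i) (o.not_adj i (σ i) hi),
      smul_zero]

end Permutations

end Orientation

end SimpleGraph

theorem stmt_9_general {V : Type*} [DecidableEq V] (G : SimpleGraph V)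
    [DecidableRel G.Adj] (hbip : G.Colorable 2) (o : G.Orientation)
    (hodd : ∀ (v : V) (c : G.Walk v v), c.IsCycle → o.OddlyOriented c)
    (S : Finset V) :
    Matrix.permanent
        ((G.adjMatrix ℤ).submatrix (Subtype.val : {x // x ∈ S} → V)
          (Subtype.val : {x // x ∈ S} → V))
      = ((Matrix.of o.sign).submatrix (Subtype.val : {x // x ∈ S} → V)
          (Subtype.val : {x // x ∈ S} → V)).det := by
  have hA : (G.adjMatrix ℤ).submatrix Subtype.val Subtype.val
      = (G.comap (Subtype.val : {x // x ∈ S} → V)).adjMatrix ℤ := by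
    ext
    simp [SimpleGraph.adjMatrix_apply]
  rw [hA]
  exact (o.comap _).permanent_adjMatrix_eq_det (hbip.of_hom (SimpleGraph.Hom.comap _ G))
    (SimpleGraph.Orientation.CyclesOddlyOriented.comap hodd Subtype.val_injective)

theorem stmt_9 {V : Type*} [Fintype V] [DecidableEq V] (G : SimpleGraph V)
    [DecidableRel G.Adj] (hbip : G.Colorable 2) (o : G.Orientation)
    (hodd : ∀ (v : V) (c : G.Walk v v), c.IsCycle → o.OddlyOriented c)
    (S : Finset V) :
    Matrix.permanent
        ((G.adjMatrix ℤ).submatrix (Subtype.val : {x // x ∈ S} → V)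
          (Subtype.val : {x // x ∈ S} → V))
      = ((Matrix.of o.sign).submatrix (Subtype.val : {x // x ∈ S} → V)
          (Subtype.val : {x // x ∈ S} → V)).det :=
  stmt_9_general G hbip o hodd S
end

section
/- Let G^e be an orientation of a bipartite graph G containing a cycle C of length 2k that is evenly oriented (an even number of its edges agree with a traversal direction). Then det(A(G^e[C])) < per(A(G[C])), where G[C] is the subgraph induced by the vertices of C. -/
/-- A closed walk is evenly oriented if an even number of its edges are directed in
agreement with the traversal direction of the walk. -/
def SimpleGraph.Orientation.EvenlyOriented {V : Type*} {G : SimpleGraph V}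
    (o : G.Orientation) {v : V} (c : G.Walk v v) : Prop :=
  Even ((c.darts.filter (fun d => o.sign d.toProd.1 d.toProd.2 = 1)).length)

open Equiv

theorem Matrix.det_lt_permanent_of_abs_le {n R : Type*} [Fintype n] [DecidableEq n] [CommRing R]
    [LinearOrder R] [IsStrictOrderedRing R] {S A : Matrix n n R} (hSA : ∀ i j, |S i j| ≤ A i j)
    {σ : Perm n} (hσ : Perm.sign σ • ∏ i, S (σ i) i < 0) : S.det < A.permanent := by
  have hA (τ : Perm n) : |∏ i, S (τ i) i| ≤ ∏ i, A (τ i) i := by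
    rw [Finset.abs_prod]
    exact Finset.prod_le_prod (fun i _ => abs_nonneg _) (fun i _ => hSA _ _)
  have hterm (τ : Perm n) : Perm.sign τ • ∏ i, S (τ i) i ≤ ∏ i, A (τ i) i := by
    refine le_trans ?_ (hA τ)
    rcases Int.units_eq_one_or (Perm.sign τ) with h | h <;>
      simp [h, le_abs_self, neg_le_abs]
  rw [Matrix.det_apply, Matrix.permanent]
  exact Finset.sum_lt_sum (fun τ _ => hterm τ)
    ⟨σ, Finset.mem_univ _, hσ.trans_le ((abs_nonneg _).trans (hA σ))⟩

namespace SimpleGraph.Orientation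

variable {V : Type*} {G : SimpleGraph V} (o : G.Orientation)

theorem sign_dart_eq_one_or_neg_one (d : G.Dart) :
    o.sign d.fst d.snd = 1 ∨ o.sign d.fst d.snd = -1 :=
  o.adj _ _ d.adj

theorem abs_sign_le_adjMatrix [DecidableRel G.Adj] (u w : V) :
    |o.sign u w| ≤ G.adjMatrix ℤ u w := by
  by_cases h : G.Adj u w
  · rcases o.adj u w h with h' | h' <;> simp [h, h']
  · simp [h, o.not_adj u w h]

-- The exponent has the parity of the number of darts traversed against their orientation.
theorem prod_sign_darts {u w : V} (p : G.Walk u w) :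
    (p.darts.map fun d => o.sign d.fst d.snd).prod =
      (-1) ^ (p.length + (p.darts.filter fun d => o.sign d.toProd.1 d.toProd.2 = 1).length) := by
  induction p with
  | nil => simp
  | cons h p ih =>
    rcases o.sign_dart_eq_one_or_neg_one ⟨(_, _), h⟩ with h' | h' <;>
      simp_all [pow_succ, pow_add]

theorem EvenlyOriented.prod_sign_darts_eq_one {o : G.Orientation} {v : V} {c : G.Walk v v}
    (heven : o.EvenlyOriented c) (hlen : Even c.length) :
    (c.darts.map fun d => o.sign d.fst d.snd).prod = 1 := by
  rw [o.prod_sign_darts, (hlen.add heven).neg_one_pow]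

end SimpleGraph.Orientation

theorem List.Nodup.sign_subtypePerm_formPerm {α : Type*} [DecidableEq α] {l : List α}
    (hl : l.Nodup) (hlen : 2 ≤ l.length) {s : Finset α} (hs : ∀ x, x ∈ s ↔ x ∈ l)
    (h : ∀ x, l.formPerm x ∈ s ↔ x ∈ s) :
    Perm.sign (l.formPerm.subtypePerm h) = -(-1) ^ l.length := by
  obtain rfl : s = l.toFinset := by ext x; simp [hs]
  have hcard : l.toFinset.card = l.length := List.toFinset_card_of_nodup hl
  have hcyc : (l.formPerm.subtypePerm h).IsCycle := by
    refine Perm.IsCycleOn.isCycle_subtypePerm ?_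
      (Finset.one_lt_card_iff_nontrivial.mp (by omega))
    convert hl.isCycleOn_formPerm using 1
    ext x; simp
  have hsupp : (l.formPerm.subtypePerm h).support = Finset.univ := by
    ext ⟨x, hx⟩
    simp only [Perm.mem_support, Finset.mem_univ, iff_true, ne_eq, Subtype.ext_iff,
      Perm.subtypePerm_apply]
    exact (List.formPerm_apply_mem_ne_self_iff l hl x (List.mem_toFinset.mp hx)).mpr hlen
  rw [hcyc.sign, hsupp, Finset.card_univ, Fintype.card_coe, hcard]

namespace SimpleGraph.Walk

variable {V : Type*} {G : SimpleGraph V} {v : V} {c : G.Walk v v}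

theorem IsCycle.mem_dropLast_support_iff (hc : c.IsCycle) {x : V} :
    x ∈ c.support.dropLast ↔ x ∈ c.support := by
  refine ⟨List.mem_of_mem_dropLast, fun hx => ?_⟩
  rw [← c.dropLast_support_concat, List.mem_append, List.mem_singleton] at hx
  rcases hx with hx | rfl
  · exact hx
  · have h0 : 0 < c.darts.length := by have := hc.three_le_length; simp; omega
    rw [← c.map_fst_darts]
    exact List.mem_map.mpr ⟨c.darts[0], List.getElem_mem h0, by simp⟩

theorem IsCycle.formPerm_dropLast_support_fst [DecidableEq V] (hc : c.IsCycle) {d : G.Dart}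
    (hd : d ∈ c.darts) : c.support.dropLast.formPerm d.fst = d.snd := by
  obtain ⟨i, hi, rfl⟩ := List.getElem_of_mem hd
  rw [fst_darts_getElem, snd_darts_getElem,
    List.formPerm_apply_getElem _ hc.nodup_dropLast_support, List.getElem_tail]
  rcases Nat.lt_or_ge (i + 1) c.length with hlt | hge
  · simp [Nat.mod_eq_of_lt, hlt]
  · have hi' : i + 1 = c.length := by simp at hi; omega
    simp [hi', List.getElem_dropLast]

theorem IsCycle.exists_perm_support_toFinset [DecidableEq V] (hc : c.IsCycle) (M : Type*)
    [CommMonoid M] :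
    ∃ τ : Perm c.support.toFinset, Perm.sign τ = -(-1) ^ c.length ∧
      ∀ f : V → V → M,
        ∏ x : c.support.toFinset, f x (τ x) = (c.darts.map fun d => f d.fst d.snd).prod := by
  have hmem (x : V) : x ∈ c.support.toFinset ↔ x ∈ c.support.dropLast := by
    rw [List.mem_toFinset, hc.mem_dropLast_support_iff]
  have hτ (x : V) :
      c.support.dropLast.formPerm x ∈ c.support.toFinset ↔ x ∈ c.support.toFinset := by
    rw [hmem, hmem, List.formPerm_mem_iff_mem]
  have hlen : 2 ≤ c.support.dropLast.length := by have := hc.three_le_length; simp; omega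
  refine ⟨c.support.dropLast.formPerm.subtypePerm hτ, ?_, fun f => ?_⟩
  · rw [hc.nodup_dropLast_support.sign_subtypePerm_formPerm hlen hmem, List.length_dropLast,
      length_support, Nat.add_sub_cancel]
  · have hs : c.support.toFinset = c.support.dropLast.toFinset := by ext x; simp [hmem]
    set σ := c.support.dropLast.formPerm with hσ
    simp only [Perm.subtypePerm_apply]
    rw [Finset.prod_coe_sort c.support.toFinset (fun x => f x (σ x)), hs,
      List.prod_toFinset _ hc.nodup_dropLast_support, ← c.map_fst_darts, List.map_map]
    exact congrArg List.prod (List.map_congr_left fun d hd => by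
      rw [Function.comp_apply, hσ, hc.formPerm_dropLast_support_fst hd])

end SimpleGraph.Walk

theorem stmt_10_general {V : Type*} [DecidableEq V] (G : SimpleGraph V)
    [DecidableRel G.Adj] (hbip : G.Colorable 2) (o : G.Orientation)
    {v : V} (c : G.Walk v v) (hc : c.IsCycle) (heven : o.EvenlyOriented c) :
    ((Matrix.of o.sign).submatrix (Subtype.val : {x // x ∈ c.support.toFinset} → V)
        (Subtype.val : {x // x ∈ c.support.toFinset} → V)).det
      < Matrix.permanent
          ((G.adjMatrix ℤ).submatrix (Subtype.val : {x // x ∈ c.support.toFinset} → V)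
            (Subtype.val : {x // x ∈ c.support.toFinset} → V)) := by
  have hlen : Even c.length := SimpleGraph.two_colorable_iff_forall_loop_even.mp hbip v c
  obtain ⟨τ, hsign, hprod⟩ := hc.exists_perm_support_toFinset ℤ
  refine Matrix.det_lt_permanent_of_abs_le (σ := τ⁻¹)
    (fun i j => o.abs_sign_le_adjMatrix i j) ?_
  rw [Perm.sign_inv, ← Equiv.prod_comp τ]
  simp only [Perm.coe_inv, symm_apply_apply, Matrix.submatrix_apply, Matrix.of_apply]
  rw [hprod, heven.prod_sign_darts_eq_one hlen, hsign, hlen.neg_one_pow]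
  decide

theorem stmt_10 {V : Type*} [Fintype V] [DecidableEq V] (G : SimpleGraph V)
    [DecidableRel G.Adj] (hbip : G.Colorable 2) (o : G.Orientation)
    {v : V} (c : G.Walk v v) (hc : c.IsCycle) (heven : o.EvenlyOriented c) :
    ((Matrix.of o.sign).submatrix (Subtype.val : {x // x ∈ c.support.toFinset} → V)
        (Subtype.val : {x // x ∈ c.support.toFinset} → V)).det
      < Matrix.permanent
          ((G.adjMatrix ℤ).submatrix (Subtype.val : {x // x ∈ c.support.toFinset} → V)
            (Subtype.val : {x // x ∈ c.support.toFinset} → V)) :=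
  stmt_10_general G hbip o c hc heven
end

section
/- If a bipartite graph G contains no even subdivision of K_{2,3} as a subgraph, then G is planar. -/
/-- `G.HasSubdivision H plen` means `G` contains a subdivision of `H` in which the path
replacing each edge of `H` has length satisfying `plen`: there is an injection `f` of the
vertices of `H` (branch vertices) into `G`, and for each edge of `H` a path in `G` between the
corresponding branch vertices, such that no branch vertex is an internal vertex of any such
path and paths corresponding to distinct edges meet only in branch vertices. -/
def SimpleGraph.HasSubdivision {V W : Type*} (G : SimpleGraph V) (H : SimpleGraph W)
    (plen : ℕ → Prop) : Prop :=
  ∃ f : W → V, Function.Injective f ∧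
    ∃ p : ∀ a b, H.Adj a b → G.Walk (f a) (f b),
      (∀ a b (h : H.Adj a b), (p a b h).IsPath) ∧
      (∀ a b (h : H.Adj a b), plen (p a b h).length) ∧
      (∀ a b (h : H.Adj a b) (w : W), f w ∈ (p a b h).support → w = a ∨ w = b) ∧
      (∀ a b a' b' (h : H.Adj a b) (h' : H.Adj a' b'), s(a, b) ≠ s(a', b') →
        ∀ x, x ∈ (p a b h).support → x ∈ (p a' b' h').support →
          (x = f a ∨ x = f b) ∧ (x = f a' ∨ x = f b'))

/-- `G` contains a subdivision of `H`. -/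
def SimpleGraph.ContainsSubdivision {V W : Type*} (G : SimpleGraph V) (H : SimpleGraph W) :
    Prop :=
  G.HasSubdivision H fun _ => True

/-- `G` contains an even subdivision of `H`, i.e. a subdivision in which every edge of `H`
is subdivided an even number of times (so the replacing paths have odd length). -/
def SimpleGraph.ContainsEvenSubdivision {V W : Type*} (G : SimpleGraph V) (H : SimpleGraph W) :
    Prop :=
  G.HasSubdivision H fun n => Odd n

/-- Planarity, via Kuratowski's characterization: no subdivision of `K₅` or `K₃,₃`. -/
def SimpleGraph.KuratowskiPlanar {V : Type*} (G : SimpleGraph V) : Prop :=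
  ¬ G.ContainsSubdivision (completeGraph (Fin 5)) ∧
    ¬ G.ContainsSubdivision (completeBipartiteGraph (Fin 3) (Fin 3))

open SimpleGraph

private lemma fin2_aux : ∀ a b c : Fin 2, a ≠ b → (a = c ↔ ¬ b = c) := by decide

lemma walk_parity {V : Type*} {G : SimpleGraph V} (C : G.Coloring (Fin 2)) {u v : V}
    (w : G.Walk u v) : C u = C v ↔ Even w.length := by
  induction w with
  | nil => simp
  | @cons u x v h q ih =>
    rw [Walk.length_cons, Nat.even_add_one, ← ih]
    exact fin2_aux _ _ _ (C.valid h)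

lemma core {V : Type*} {G : SimpleGraph V} (C : G.Coloring (Fin 2))
    (A : Fin 3 → V) (B : Fin 2 → V)
    (hAB : ∀ i j, A i ≠ B j) (hA : Function.Injective A) (hB : B 0 ≠ B 1)
    (hBc : C (B 0) = C (B 1))
    (p : ∀ i j, G.Walk (A i) (B j))
    (hp : ∀ i j, (p i j).IsPath)
    (hbrA : ∀ i j i', A i' ∈ (p i j).support → i' = i)
    (hbrB : ∀ i j j', B j' ∈ (p i j).support → j' = j)
    (hdisj : ∀ i j i' j', (i, j) ≠ (i', j') → ∀ x, x ∈ (p i j).support →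
      x ∈ (p i' j').support → (x = A i ∨ x = B j) ∧ (x = A i' ∨ x = B j')) :
    G.ContainsEvenSubdivision (completeBipartiteGraph (Fin 2) (Fin 3)) := by
  have hBc' : ∀ j : Fin 2, C (B j) = C (B 0) := by
    intro j; fin_cases j
    · rfl
    · exact hBc.symm
  have key : ∀ i : Fin 3, ∃ (v : V) (q : ∀ j : Fin 2, G.Walk v (B j)),
      (∀ j, (q j).IsPath) ∧ (∀ j, Odd (q j).length) ∧
      (∀ j x, x ∈ (q j).support → x = v ∨ x ∈ (p i j).support) ∧
      v ∈ (p i 0).support ∧ (∀ j, v ≠ B j) ∧ (v = A i ∨ A i ∉ (q 0).support) := by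
    intro i
    by_cases hc : C (A i) = C (B 0)
    · -- all p i j even; trim the first edge of p i 0 and reroute p i 1 through A i
      obtain ⟨w, hadj, q0, heq⟩ := Walk.exists_eq_cons_of_ne (hAB i 0) (p i 0)
      have hpath0 : (Walk.cons hadj q0).IsPath := heq ▸ hp i 0
      rw [Walk.cons_isPath_iff] at hpath0
      have hwne : ∀ j, w ≠ B j := by
        intro j hwB
        have hcv : C (A i) ≠ C w := C.valid hadj
        rw [hwB, hBc' j] at hcv
        exact hcv hc
      have hwmem : w ∈ (p i 0).support := by
        rw [heq, Walk.support_cons]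
        exact List.mem_cons_of_mem _ q0.start_mem_support
      have hwnot1 : w ∉ (p i 1).support := by
        intro hw1
        have hd := hdisj i 0 i 1 (by simp) w hwmem hw1
        rcases hd.1 with h1 | h1
        · exact hadj.ne h1.symm
        · exact hwne 0 h1
      set q1 : G.Walk w (B 1) := Walk.cons hadj.symm (p i 1) with hq1
      have hq1path : q1.IsPath := (Walk.cons_isPath_iff _ _).2 ⟨hp i 1, hwnot1⟩
      have hq0odd : Odd q0.length := by
        have he : Even (p i 0).length := (walk_parity C (p i 0)).1 hc
        rw [heq, Walk.length_cons, Nat.even_add_one] at he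
        exact Nat.not_even_iff_odd.1 he
      have hq1odd : Odd q1.length := by
        rw [hq1, Walk.length_cons]
        have he : Even (p i 1).length := (walk_parity C (p i 1)).1 (hc.trans (hBc' 1).symm)
        exact he.add_one
      have hq0supp : ∀ x, x ∈ q0.support → x = w ∨ x ∈ (p i 0).support := by
        intro x hx
        right; rw [heq, Walk.support_cons]; exact List.mem_cons_of_mem _ hx
      have hq1supp : ∀ x, x ∈ q1.support → x = w ∨ x ∈ (p i 1).support := by
        intro x hx
        rw [hq1, Walk.support_cons, List.mem_cons] at hx
        exact hx
      refine ⟨w, fun j => match j with | 0 => q0 | 1 => q1, ?_, ?_, ?_, hwmem, hwne,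
        Or.inr hpath0.2⟩
      · intro j; fin_cases j
        · exact hpath0.1
        · exact hq1path
      · intro j; fin_cases j
        · exact hq0odd
        · exact hq1odd
      · intro j; fin_cases j
        · exact hq0supp
        · exact hq1supp
    · -- all p i j odd; take v = A i
      refine ⟨A i, fun j => p i j, hp i, ?_, fun j x hx => Or.inr hx,
        (p i 0).start_mem_support, hAB i, Or.inl rfl⟩
      intro j
      have hno : ¬ Even (p i j).length := by
        intro he
        have hcc := (walk_parity C (p i j)).2 he
        rw [hBc' j] at hcc
        exact hc hcc
      exact Nat.not_even_iff_odd.1 hno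
  choose v q hqpath hqodd hqsupp hvmem hvB hvA using key
  -- basic distinctness facts
  have hBinj : ∀ j j' : Fin 2, B j = B j' → j = j' := by
    intro j j' hjj
    by_contra hne
    have : B 0 = B 1 := by
      fin_cases j <;> fin_cases j' <;> simp_all
    exact hB this
  have hAne : ∀ i i' : Fin 3, i ≠ i' → A i ≠ A i' := fun i i' hne he => hne (hA he)
  have hvInj : ∀ i i' : Fin 3, v i = v i' → i = i' := by
    intro i i' hvv
    by_contra hne
    have hd := hdisj i 0 i' 0 (by simp [hne]) (v i) (hvmem i) (hvv ▸ hvmem i')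
    rcases hd.1 with h1 | h1
    · rcases hd.2 with h2 | h2
      · exact hAne i i' hne (h1 ▸ h2 ▸ rfl)
      · exact hvB i 0 h2
    · exact hvB i 0 h1
  have hvA' : ∀ i i' : Fin 3, i ≠ i' → ∀ j, v i ∉ (p i' j).support := by
    intro i i' hne j hmem
    have hd := hdisj i 0 i' j (by simp [hne]) (v i) (hvmem i) hmem
    rcases hd.1 with h1 | h1
    · rcases hd.2 with h2 | h2
      · exact hAne i i' hne (h1 ▸ h2 ▸ rfl)
      · exact hAB i j (h1 ▸ h2)
    · exact hvB i 0 h1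
  -- the key disjointness property for the new paths
  have keyDisj : ∀ i j i' j', (i, j) ≠ (i', j') → ∀ x, x ∈ (q i j).support →
      x ∈ (q i' j').support → (x = v i ∨ x = B j) ∧ (x = v i' ∨ x = B j') := by
    intro i j i' j' hne x hx hx'
    by_cases hii : i = i'
    · subst hii
      have hjj : j ≠ j' := fun hj => hne (by rw [hj])
      rcases hqsupp i j x hx with rfl | hxp
      · exact ⟨Or.inl rfl, Or.inl rfl⟩
      rcases hqsupp i j' x hx' with rfl | hxp'
      · exact ⟨Or.inl rfl, Or.inl rfl⟩
      have hd := hdisj i j i j' (by simp [hjj]) x hxp hxp'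
      have hxA : x = A i := by
        rcases hd.1 with h1 | h1
        · exact h1
        · rcases hd.2 with h2 | h2
          · exact h2
          · exact absurd (hBinj j j' (h1 ▸ h2 ▸ rfl)) hjj
      -- x = A i, but then x must equal v i
      rcases hvA i with hv | hv
      · exact ⟨Or.inl (hxA.trans hv.symm), Or.inl (hxA.trans hv.symm)⟩
      · exfalso
        have h0 : j = 0 ∨ j' = 0 := by omega
        rcases h0 with rfl | rfl
        · exact hv (hxA ▸ hx)
        · exact hv (hxA ▸ hx')
    · rcases hqsupp i j x hx with rfl | hxp
      · rcases hqsupp i' j' _ hx' with heq | hxp'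
        · exact absurd (hvInj i i' heq) hii
        · exact absurd hxp' (hvA' i i' hii j')
      rcases hqsupp i' j' x hx' with rfl | hxp'
      · exact absurd hxp (hvA' i' i (Ne.symm hii) j)
      have hd := hdisj i j i' j' (by simp [hii]) x hxp hxp'
      rcases hd.1 with h1 | h1
      · rcases hd.2 with h2 | h2
        · exact absurd (hA (h1 ▸ h2 ▸ rfl : A i = A i')) hii
        · exact absurd (h1 ▸ h2) (hAB i j')
      · rcases hd.2 with h2 | h2
        · exact absurd (h2 ▸ h1) (hAB i' j)
        · exact ⟨Or.inr h1, Or.inr h2⟩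
  -- the branch-vertex property for the new paths
  have keyBrB : ∀ i j j', B j' ∈ (q i j).support → j' = j := by
    intro i j j' hmem
    rcases hqsupp i j _ hmem with heq | hmem'
    · exact absurd heq.symm (hvB i j')
    · exact hbrB i j j' hmem'
  have keyBrV : ∀ i j i', v i' ∈ (q i j).support → i' = i := by
    intro i j i' hmem
    rcases hqsupp i j _ hmem with heq | hmem'
    · exact hvInj i' i heq
    · by_contra hne
      exact hvA' i' i hne j hmem'
  have hvBne : ∀ i j, v i ≠ B j := hvB
  -- assemble
  refine ⟨Sum.elim B v, ?_, fun a b hab =>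
      match a, b, hab with
      | Sum.inl j, Sum.inr i, _ => (q i j).reverse
      | Sum.inr i, Sum.inl j, _ => q i j
      | Sum.inl _, Sum.inl _, hab => absurd hab (by simp)
      | Sum.inr _, Sum.inr _, hab => absurd hab (by simp),
      ?_, ?_, ?_, ?_⟩
  · rintro (j | i) (j' | i') heq
    · exact congrArg Sum.inl (hBinj j j' heq)
    · exact absurd heq.symm (hvBne i' j)
    · exact absurd heq (hvBne i j')
    · exact congrArg Sum.inr (hvInj i i' heq)
  · rintro (j | i) (j' | i') hab
    · simp at hab
    · exact (hqpath i' j).reverse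
    · exact hqpath i j'
    · simp at hab
  · rintro (j | i) (j' | i') hab
    · simp at hab
    · show Odd (q i' j).reverse.length
      rw [Walk.length_reverse]
      exact hqodd i' j
    · exact hqodd i j'
    · simp at hab
  · rintro (j | i) (j' | i') hab w hw
    · simp at hab
    · rcases w with jw | iw
      · show Sum.inl jw = Sum.inl j ∨ Sum.inl jw = Sum.inr i'
        have hw' : B jw ∈ (q i' j).support := by
          have : B jw ∈ (q i' j).reverse.support := hw
          rwa [Walk.support_reverse, List.mem_reverse] at this
        exact Or.inl (congrArg Sum.inl (keyBrB i' j jw hw'))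
      · have hw' : v iw ∈ (q i' j).support := by
          have : v iw ∈ (q i' j).reverse.support := hw
          rwa [Walk.support_reverse, List.mem_reverse] at this
        exact Or.inr (congrArg Sum.inr (keyBrV i' j iw hw'))
    · rcases w with jw | iw
      · exact Or.inr (congrArg Sum.inl (keyBrB i j' jw hw))
      · exact Or.inl (congrArg Sum.inr (keyBrV i j' iw hw))
    · simp at hab
  · rintro (j | i) (j' | i') (j₂ | i₂) (j₂' | i₂') hab hab' hS x hx hx' <;>
      try simp at hab
    all_goals try simp at hab'
    -- remaining four cases
    · -- (inl j, inr i') vs (inl j₂, inr i₂')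
      have hx1 : x ∈ (q i' j).support := by
        have : x ∈ (q i' j).reverse.support := hx
        rwa [Walk.support_reverse, List.mem_reverse] at this
      have hx2 : x ∈ (q i₂' j₂).support := by
        have : x ∈ (q i₂' j₂).reverse.support := hx'
        rwa [Walk.support_reverse, List.mem_reverse] at this
      have hne : (i', j) ≠ (i₂', j₂) := by
        rintro heq
        rw [Prod.mk.injEq] at heq
        exact hS (by rw [heq.1, heq.2])
      have hd := keyDisj i' j i₂' j₂ hne x hx1 hx2
      exact ⟨hd.1.symm, hd.2.symm⟩
    · -- (inl j, inr i') vs (inr i₂, inl j₂')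
      have hx1 : x ∈ (q i' j).support := by
        have : x ∈ (q i' j).reverse.support := hx
        rwa [Walk.support_reverse, List.mem_reverse] at this
      have hne : (i', j) ≠ (i₂, j₂') := by
        rintro heq
        rw [Prod.mk.injEq] at heq
        exact hS (by rw [heq.1, heq.2]; exact Sym2.eq_swap)
      have hd := keyDisj i' j i₂ j₂' hne x hx1 hx'
      exact ⟨hd.1.symm, hd.2⟩
    · -- (inr i, inl j') vs (inl j₂, inr i₂')
      have hx2 : x ∈ (q i₂' j₂).support := by
        have : x ∈ (q i₂' j₂).reverse.support := hx'
        rwa [Walk.support_reverse, List.mem_reverse] at this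
      have hne : (i, j') ≠ (i₂', j₂) := by
        rintro heq
        rw [Prod.mk.injEq] at heq
        exact hS (by rw [heq.1, heq.2]; exact Sym2.eq_swap)
      have hd := keyDisj i j' i₂' j₂ hne x hx hx2
      exact ⟨hd.1, hd.2.symm⟩
    · -- (inr i, inl j') vs (inr i₂, inl j₂')
      have hne : (i, j') ≠ (i₂, j₂') := by
        rintro heq
        rw [Prod.mk.injEq] at heq
        exact hS (by rw [heq.1, heq.2])
      exact keyDisj i j' i₂ j₂' hne x hx hx'

theorem stmt_11 {V : Type*} (G : SimpleGraph V) (hbip : G.Colorable 2)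
    (h : ¬ G.ContainsEvenSubdivision (completeBipartiteGraph (Fin 2) (Fin 3))) :
    G.KuratowskiPlanar := by
  obtain ⟨C⟩ := hbip
  have pig : ∀ g : Fin 3 → Fin 2, ∃ x y z : Fin 3, x ≠ y ∧ x ≠ z ∧ y ≠ z ∧ g x = g y := by
    decide
  constructor
  · -- no K₅ subdivision
    rintro ⟨f, hf, p, hpath, -, hbr, hdisj⟩
    have emb : Fin 3 → Fin 5 := fun k => ⟨k.val, by omega⟩
    obtain ⟨x, y, z, hxy, hxz, hyz, hg⟩ := pig (fun k => C (f ⟨k.val, by omega⟩))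
    set iA : Fin 3 → Fin 5 := ![⟨z.val, by omega⟩, 3, 4] with hiAdef
    set iB : Fin 2 → Fin 5 := fun j => ⟨(![x, y] j).val, by omega⟩ with hiBdef
    have hxlt := x.isLt; have hylt := y.isLt; have hzlt := z.isLt
    have hxy' : x.val ≠ y.val := fun hh => hxy (Fin.ext hh)
    have hxz' : x.val ≠ z.val := fun hh => hxz (Fin.ext hh)
    have hyz' : y.val ≠ z.val := fun hh => hyz (Fin.ext hh)
    have hiAB : ∀ i j, iA i ≠ iB j := by
      intro i j he
      have hv := congrArg Fin.val he
      fin_cases i <;> fin_cases j <;> simp [hiAdef, hiBdef] at hv <;> omega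
    have hiAinj : ∀ i i' : Fin 3, iA i = iA i' → i = i' := by
      intro i i' he
      have hv := congrArg Fin.val he
      fin_cases i <;> fin_cases i' <;> simp [hiAdef] at hv <;> first | rfl | omega
    have hiBinj : ∀ j j' : Fin 2, iB j = iB j' → j = j' := by
      intro j j' he
      have hv := congrArg Fin.val he
      fin_cases j <;> fin_cases j' <;> simp [hiBdef] at hv <;> first | rfl | omega
    have hadj : ∀ i j, (completeGraph (Fin 5)).Adj (iA i) (iB j) := fun i j => hiAB i j
    apply h
    refine core C (fun i => f (iA i)) (fun j => f (iB j)) (fun i j he => hiAB i j (hf he))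
      (fun i i' he => hiAinj i i' (hf he)) (fun he => absurd (hiBinj 0 1 (hf he)) (by decide))
      ?_ (fun i j => p _ _ (hadj i j)) (fun i j => hpath _ _ _) ?_ ?_ ?_
    · show C (f (iB 0)) = C (f (iB 1))
      have h0 : iB 0 = ⟨x.val, by omega⟩ := by simp [hiBdef]
      have h1 : iB 1 = ⟨y.val, by omega⟩ := by simp [hiBdef]
      rw [h0, h1]; exact hg
    · intro i j i' hmem
      rcases hbr _ _ (hadj i j) (iA i') hmem with he | he
      · exact hiAinj i' i he
      · exact absurd he (hiAB i' j)
    · intro i j j' hmem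
      rcases hbr _ _ (hadj i j) (iB j') hmem with he | he
      · exact absurd he.symm (hiAB i j')
      · exact hiBinj j' j he
    · intro i j i' j' hne xx hx hx'
      refine hdisj _ _ _ _ (hadj i j) (hadj i' j') ?_ xx hx hx'
      intro hS
      rw [Sym2.eq_iff] at hS
      rcases hS with ⟨h1, h2⟩ | ⟨h1, h2⟩
      · exact hne (by rw [hiAinj _ _ h1, hiBinj _ _ h2])
      · exact hiAB i j' h1
  · -- no K₃,₃ subdivision
    rintro ⟨f, hf, p, hpath, -, hbr, hdisj⟩
    obtain ⟨x, y, z, hxy, hxz, hyz, hg⟩ := pig (fun k => C (f (Sum.inr k)))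
    set iA : Fin 3 → (Fin 3 ⊕ Fin 3) := Sum.inl with hiAdef
    set iB : Fin 2 → (Fin 3 ⊕ Fin 3) := fun j => Sum.inr (![x, y] j) with hiBdef
    have hBvecinj : ∀ j j' : Fin 2, (![x, y] j : Fin 3) = ![x, y] j' → j = j' := by
      intro j j' he
      fin_cases j <;> fin_cases j' <;>
        simp only [Matrix.cons_val_zero, Matrix.cons_val_one, Matrix.head_cons] at he <;>
        first
          | rfl
          | exact absurd he hxy
          | exact absurd he hxy.symm
    have hiAB : ∀ i j, iA i ≠ iB j := by intro i j he; simp [hiAdef, hiBdef] at he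
    have hiAinj : ∀ i i' : Fin 3, iA i = iA i' → i = i' := by
      intro i i' he; simpa [hiAdef] using he
    have hiBinj : ∀ j j' : Fin 2, iB j = iB j' → j = j' := by
      intro j j' he
      simp only [hiBdef, Sum.inr.injEq] at he
      exact hBvecinj j j' he
    have hadj : ∀ i j, (completeBipartiteGraph (Fin 3) (Fin 3)).Adj (iA i) (iB j) := by
      intro i j; simp [hiAdef, hiBdef]
    apply h
    refine core C (fun i => f (iA i)) (fun j => f (iB j)) (fun i j he => hiAB i j (hf he))
      (fun i i' he => hiAinj i i' (hf he)) (fun he => absurd (hiBinj 0 1 (hf he)) (by decide))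
      ?_ (fun i j => p _ _ (hadj i j)) (fun i j => hpath _ _ _) ?_ ?_ ?_
    · show C (f (iB 0)) = C (f (iB 1))
      have h0 : iB 0 = Sum.inr x := by simp [hiBdef]
      have h1 : iB 1 = Sum.inr y := by simp [hiBdef]
      rw [h0, h1]; exact hg
    · intro i j i' hmem
      rcases hbr _ _ (hadj i j) (iA i') hmem with he | he
      · exact hiAinj i' i he
      · exact absurd he (hiAB i' j)
    · intro i j j' hmem
      rcases hbr _ _ (hadj i j) (iB j') hmem with he | he
      · exact absurd he.symm (hiAB i j')
      · exact hiBinj j' j he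
    · intro i j i' j' hne xx hx hx'
      refine hdisj _ _ _ _ (hadj i j) (hadj i' j') ?_ xx hx hx'
      intro hS
      rw [Sym2.eq_iff] at hS
      rcases hS with ⟨h1, h2⟩ | ⟨h1, h2⟩
      · exact hne (by rw [hiAinj _ _ h1, hiBinj _ _ h2])
      · exact hiAB i j' h1
end

section
/- A bipartite graph is outerplanar if and only if it contains no subdivision of K_{2,3}. -/
/-- Outerplanarity, via the characterization by forbidden subdivisions of `K₄` and `K₂,₃`. -/
def SimpleGraph.Outerplanar {V : Type*} (G : SimpleGraph V) : Prop :=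
  ¬ G.ContainsSubdivision (completeGraph (Fin 4)) ∧
    ¬ G.ContainsSubdivision (completeBipartiteGraph (Fin 2) (Fin 3))

/-! A subdivision of `K₄` in a bipartite graph cannot use only single edges, since `K₄`
contains a triangle. So the path replacing some edge `ab` has an interior vertex `x`, and
cutting it there gives a subdivision of `K₄` with `ab` subdivided once. That graph contains
`K₂,₃`, with parts `{a, b}` and `{c, d, x}` for the remaining branch vertices `c`, `d`. -/

open Function

namespace SimpleGraph

variable {V W : Type*}

/-- The graph obtained from `H` by subdividing the edge `uv` once, the new vertex being `none`. -/
def splitEdge (H : SimpleGraph W) (u v : W) : SimpleGraph (Option W) where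
  Adj
    | some a, some b => H.Adj a b ∧ s(a, b) ≠ s(u, v)
    | none, some a | some a, none => a = u ∨ a = v
    | none, none => False
  symm := ⟨by
    rintro (_ | a) (_ | b) h
    exacts [h, h, h, ⟨h.1.symm, Sym2.eq_swap (a := b) ▸ h.2⟩]⟩
  loopless := ⟨by
    rintro (_ | a) h
    exacts [h, h.1.ne rfl]⟩

variable {G : SimpleGraph V} {H : SimpleGraph W}

namespace Walk

variable {a b x y : V} {P : G.Walk a b}

lemma IsPath.exists_mem_support_ne_ne (hP : P.IsPath) (hlen : 1 < P.length) :
    ∃ x ∈ P.support, x ≠ a ∧ x ≠ b := by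
  cases P with
  | nil => simp at hlen
  | @cons _ x _ hadj P' =>
    obtain ⟨hP', ha⟩ := (cons_isPath_iff hadj P').mp hP
    refine ⟨x, by simp, fun hxa => ha (hxa ▸ P'.start_mem_support), fun hxb => ?_⟩
    subst hxb
    simp [length_eq_zero_iff.mpr (isPath_iff_nil.mp hP')] at hlen

variable [DecidableEq V]

lemma IsPath.eq_of_mem_support_takeUntil_of_mem_support_dropUntil (hP : P.IsPath)
    (hx : x ∈ P.support) (hy₁ : y ∈ (P.takeUntil x hx).support)
    (hy₂ : y ∈ (P.dropUntil x hx).support) : y = x := by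
  by_contra hyx
  rw [← P.take_spec hx] at hP
  exact hP.ne_of_mem_support_of_append hyx hy₁ hy₂ rfl

/-- The part of `P` between a vertex `x` on it and the endpoint `e` of `P`. -/
def piece (P : G.Walk a b) (hx : x ∈ P.support) (e : V) (he : e = a ∨ e = b) : G.Walk x e :=
  if h : e = a then (P.takeUntil x hx).reverse.copy rfl h.symm
  else (P.dropUntil x hx).copy rfl (he.resolve_left h).symm

variable {e e' : V} {he : e = a ∨ e = b} {he' : e' = a ∨ e' = b}

lemma IsPath.piece (hP : P.IsPath) (hx : x ∈ P.support) : (P.piece hx e he).IsPath := by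
  unfold Walk.piece
  split_ifs
  · simpa using (hP.takeUntil hx).reverse
  · simpa using hP.dropUntil hx

lemma support_piece_subset (hx : x ∈ P.support) : (P.piece hx e he).support ⊆ P.support := by
  unfold piece
  split_ifs
  · simpa using P.support_takeUntil_subset_support hx
  · simpa using P.support_dropUntil_subset_support hx

lemma IsPath.eq_of_mem_support_piece_of_mem_support_piece (hP : P.IsPath) (hx : x ∈ P.support)
    (hee' : e ≠ e') (hy : y ∈ (P.piece hx e he).support)
    (hy' : y ∈ (P.piece hx e' he').support) :
    y = x := by
  unfold Walk.piece at hy hy'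
  split_ifs at hy hy' with h h' h'
  · exact absurd (h.trans h'.symm) hee'
  · simp only [support_copy, support_reverse, List.mem_reverse] at hy hy'
    exact hP.eq_of_mem_support_takeUntil_of_mem_support_dropUntil hx hy hy'
  · simp only [support_copy, support_reverse, List.mem_reverse] at hy hy'
    exact hP.eq_of_mem_support_takeUntil_of_mem_support_dropUntil hx hy' hy
  · exact absurd ((he.resolve_left h).trans (he'.resolve_left h').symm) hee'

lemma IsPath.eq_of_mem_support_piece (hP : P.IsPath) (hx : x ∈ P.support) (hxa : x ≠ a)
    (hxb : x ≠ b) (he' : e' = a ∨ e' = b) (h : e' ∈ (P.piece hx e he).support) : e' = e := by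
  by_contra hne
  have hx' := hP.eq_of_mem_support_piece_of_mem_support_piece hx (Ne.symm hne) h
    ((P.piece hx e' he').end_mem_support)
  rcases he' with rfl | rfl
  exacts [hxa hx'.symm, hxb hx'.symm]

end Walk

/-- The clauses of `HasSubdivision` other than the length constraint. Distinct paths are only
required to meet in branch vertices; `eq_or_eq_of_mem_support` then pins down which ones. -/
structure IsSubdivision {G : SimpleGraph V} {H : SimpleGraph W} (f : W → V)
    (p : ∀ a b, H.Adj a b → G.Walk (f a) (f b)) : Prop where
  injective : Injective f
  isPath a b h : (p a b h).IsPath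
  eq_or_eq_of_mem_support {a b h w} : f w ∈ (p a b h).support → w = a ∨ w = b
  mem_range_of_mem_support_of_mem_support {a b a' b' h h' y} : s(a, b) ≠ s(a', b') →
    y ∈ (p a b h).support → y ∈ (p a' b' h').support → y ∈ Set.range f

namespace IsSubdivision

variable {f : W → V} {p : ∀ a b, H.Adj a b → G.Walk (f a) (f b)}

theorem eq_or_eq_of_mem_support_of_mem_support (hS : IsSubdivision f p) {a b a' b' : W}
    {h : H.Adj a b} {h' : H.Adj a' b'} (hne : s(a, b) ≠ s(a', b')) {y : V}
    (hy : y ∈ (p a b h).support) (hy' : y ∈ (p a' b' h').support) :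
    (y = f a ∨ y = f b) ∧ (y = f a' ∨ y = f b') := by
  obtain ⟨w, rfl⟩ := hS.mem_range_of_mem_support_of_mem_support hne hy hy'
  exact ⟨(hS.eq_or_eq_of_mem_support hy).imp (congrArg f) (congrArg f),
    (hS.eq_or_eq_of_mem_support hy').imp (congrArg f) (congrArg f)⟩

theorem comp_copy {W' : Type*} {H' : SimpleGraph W'} (hS : IsSubdivision f p) (c : Copy H' H) :
    IsSubdivision (f ∘ c) fun a b h => p (c a) (c b) (c.toHom.map_adj h) where
  injective := hS.injective.comp c.injective
  isPath _ _ _ := hS.isPath ..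
  eq_or_eq_of_mem_support hw :=
    (hS.eq_or_eq_of_mem_support hw).imp (c.injective ·) (c.injective ·)
  mem_range_of_mem_support_of_mem_support {a b a' b'} _ _ _ hne hy hy' := by
    have hne' : s(c a, c b) ≠ s(c a', c b') := by
      simpa only [Sym2.map_mk, Copy.toHom_apply] using (Sym2.map.injective c.injective).ne hne
    rcases (hS.eq_or_eq_of_mem_support_of_mem_support hne' hy hy').1 with rfl | rfl
    exacts [⟨a, rfl⟩, ⟨b, rfl⟩]

theorem ne_apply_of_mem_support (hS : IsSubdivision f p) {u v : W} {huv : H.Adj u v} {x : V}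
    (hx : x ∈ (p u v huv).support)
    (hxu : x ≠ f u) (hxv : x ≠ f v) (w : W) : x ≠ f w := by
  rintro rfl
  rcases hS.eq_or_eq_of_mem_support hx with rfl | rfl
  exacts [hxu rfl, hxv rfl]

end IsSubdivision

theorem hasSubdivision_iff {plen : ℕ → Prop} : G.HasSubdivision H plen ↔
    ∃ (f : W → V) (p : ∀ a b, H.Adj a b → G.Walk (f a) (f b)),
      IsSubdivision f p ∧ ∀ a b h, plen (p a b h).length := by
  constructor
  · rintro ⟨f, hf, p, hpath, hlen, hbranch, hdisj⟩
    refine ⟨f, p, ⟨hf, hpath, hbranch _ _ _ _, fun hne hy hy' => ?_⟩, hlen⟩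
    rcases (hdisj _ _ _ _ _ _ hne _ hy hy').1 with rfl | rfl
    exacts [⟨_, rfl⟩, ⟨_, rfl⟩]
  · rintro ⟨f, p, hS, hlen⟩
    exact ⟨f, hS.injective, p, hS.isPath, hlen, fun _ _ _ _ => hS.eq_or_eq_of_mem_support,
      fun _ _ _ _ _ _ hne _ => hS.eq_or_eq_of_mem_support_of_mem_support hne⟩

theorem HasSubdivision.of_isContained {W' : Type*} {H' : SimpleGraph W'} {plen : ℕ → Prop}
    (h : G.HasSubdivision H plen) (hH : H' ⊑ H) : G.HasSubdivision H' plen := by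
  obtain ⟨c⟩ := hH
  obtain ⟨f, p, hS, hlen⟩ := hasSubdivision_iff.mp h
  exact hasSubdivision_iff.mpr ⟨_, _, hS.comp_copy c, fun _ _ _ => hlen ..⟩

/-- The paths of a subdivision of `H.splitEdge u v`, the path replacing `uv` being cut at `x`. -/
def splitEdgePath [DecidableEq V] {f : W → V} (p : ∀ a b, H.Adj a b → G.Walk (f a) (f b))
    {u v : W} (huv : H.Adj u v) {x : V} (hx : x ∈ (p u v huv).support) :
    ∀ a b, (H.splitEdge u v).Adj a b → G.Walk (Option.elim a x f) (Option.elim b x f)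
  | some a, some b, h => p a b h.1
  | none, some c, h => (p u v huv).piece hx (f c) (h.imp (congrArg f) (congrArg f))
  | some c, none, h => ((p u v huv).piece hx (f c) (h.imp (congrArg f) (congrArg f))).reverse

namespace IsSubdivision

variable [DecidableEq V] {f : W → V} {p : ∀ a b, H.Adj a b → G.Walk (f a) (f b)} {u v : W}
  {huv : H.Adj u v} {x : V} {hx : x ∈ (p u v huv).support}

theorem eq_of_mem_support_piece (hS : IsSubdivision f p) (hxu : x ≠ f u) (hxv : x ≠ f v)
    {c w : W} {hc : f c = f u ∨ f c = f v}
    (hw : f w ∈ ((p u v huv).piece hx (f c) hc).support) :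
    w = c :=
  hS.injective <| (hS.isPath u v huv).eq_of_mem_support_piece hx hxu hxv
    ((hS.eq_or_eq_of_mem_support (Walk.support_piece_subset hx hw)).imp (congrArg f) (congrArg f))
    hw

theorem eq_or_eq_of_mem_support_of_mem_support_piece (hS : IsSubdivision f p) {a b : W}
    {h : H.Adj a b} (hab : s(a, b) ≠ s(u, v)) {c : W} {hc : f c = f u ∨ f c = f v} {y : V}
    (hy : y ∈ (p a b h).support) (hy' : y ∈ ((p u v huv).piece hx (f c) hc).support) :
    y = f a ∨ y = f b :=
  (hS.eq_or_eq_of_mem_support_of_mem_support hab hy (Walk.support_piece_subset hx hy')).1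

theorem splitEdgePath (hS : IsSubdivision f p) (hxu : x ≠ f u) (hxv : x ≠ f v) :
    IsSubdivision (Option.elim · x f) (splitEdgePath p huv hx) where
  injective := by
    have hxf := hS.ne_apply_of_mem_support hx hxu hxv
    rintro (_ | a) (_ | b) h
    exacts [rfl, (hxf b h).elim, (hxf a h.symm).elim, congrArg some (hS.injective h)]
  isPath := by
    rintro (_ | a) (_ | b) h <;>
      simp only [SimpleGraph.splitEdgePath, Walk.isPath_reverse_iff, Option.elim]
    exacts [h.elim, (hS.isPath u v huv).piece hx, (hS.isPath u v huv).piece hx, hS.isPath a b h.1]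
  eq_or_eq_of_mem_support {a b h w} hw := by
    rcases a with _ | a <;> rcases b with _ | b <;> rcases w with _ | w <;>
      simp only [SimpleGraph.splitEdgePath, Walk.support_reverse, List.mem_reverse,
        Option.elim] at hw
    any_goals exact h.elim
    · exact Or.inl rfl
    · exact Or.inr (congrArg some (hS.eq_of_mem_support_piece hxu hxv hw))
    · exact Or.inr rfl
    · exact Or.inl (congrArg some (hS.eq_of_mem_support_piece hxu hxv hw))
    · have hxf := hS.ne_apply_of_mem_support hx hxu hxv
      rcases (hS.eq_or_eq_of_mem_support_of_mem_support h.2 hw hx).1 with hxa | hxb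
      exacts [(hxf a hxa).elim, (hxf b hxb).elim]
    · exact (hS.eq_or_eq_of_mem_support hw).imp (congrArg some) (congrArg some)
  mem_range_of_mem_support_of_mem_support {a b a' b' h h' y} hne hy hy' := by
    have mem_range {w₁ w₂} (hy : y = f w₁ ∨ y = f w₂) :
        y ∈ Set.range (Option.elim · x f) := by
      rcases hy with rfl | rfl
      exacts [⟨some w₁, rfl⟩, ⟨some w₂, rfl⟩]
    have piece_meet {c c' hc hc'} (hcc' : c ≠ c')
        (hy : y ∈ ((p u v huv).piece hx (f c) hc).support)
        (hy' : y ∈ ((p u v huv).piece hx (f c') hc').support) :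
        y ∈ Set.range (Option.elim · x f) :=
      ⟨none, ((hS.isPath u v huv).eq_of_mem_support_piece_of_mem_support_piece hx
        (hS.injective.ne hcc') hy hy').symm⟩
    rcases a with _ | a <;> rcases b with _ | b <;> rcases a' with _ | a' <;>
      rcases b' with _ | b' <;>
      simp only [SimpleGraph.splitEdgePath, Walk.support_reverse, List.mem_reverse,
        Option.elim] at hy hy'
    any_goals exact h.elim
    any_goals exact h'.elim
    · exact piece_meet (fun e => hne (by rw [e])) hy hy'
    · exact piece_meet (fun e => hne (by rw [e, Sym2.eq_swap])) hy hy'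
    · exact mem_range (hS.eq_or_eq_of_mem_support_of_mem_support_piece h'.2 hy' hy)
    · exact piece_meet (fun e => hne (by rw [e, Sym2.eq_swap])) hy hy'
    · exact piece_meet (fun e => hne (by rw [e])) hy hy'
    · exact mem_range (hS.eq_or_eq_of_mem_support_of_mem_support_piece h'.2 hy' hy)
    · exact mem_range (hS.eq_or_eq_of_mem_support_of_mem_support_piece h.2 hy hy')
    · exact mem_range (hS.eq_or_eq_of_mem_support_of_mem_support_piece h.2 hy hy')
    · refine mem_range (hS.eq_or_eq_of_mem_support_of_mem_support (fun e => hne ?_) hy hy').1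
      simpa using congrArg (Sym2.map some) e

end IsSubdivision

theorem HasSubdivision.isContained_or_exists_containsSubdivision_splitEdge {plen : ℕ → Prop}
    (h : G.HasSubdivision H plen) :
    H ⊑ G ∨ ∃ u v, H.Adj u v ∧ G.ContainsSubdivision (H.splitEdge u v) := by
  classical
  obtain ⟨f, p, hS, -⟩ := hasSubdivision_iff.mp h
  by_cases hone : ∀ a b h, (p a b h).length = 1
  · exact Or.inl ⟨⟨⟨f, fun h => Walk.adj_of_length_eq_one (hone _ _ h)⟩, hS.injective⟩⟩
  push Not at hone
  obtain ⟨u, v, huv, hlen⟩ := hone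
  have hlen' : 1 < (p u v huv).length := by
    have : (p u v huv).length ≠ 0 := fun h0 =>
      huv.ne (hS.injective (Walk.eq_of_length_eq_zero h0))
    omega
  obtain ⟨x, hx, hxu, hxv⟩ := (hS.isPath u v huv).exists_mem_support_ne_ne hlen'
  exact Or.inr ⟨u, v, huv,
    hasSubdivision_iff.mpr ⟨_, _, hS.splitEdgePath (hx := hx) hxu hxv, fun _ _ _ => trivial⟩⟩

theorem completeBipartiteGraph_isContained_splitEdge {u v c d : W} (huv : u ≠ v) (hcd : c ≠ d)
    (huc : H.Adj u c) (hud : H.Adj u d) (hvc : H.Adj v c) (hvd : H.Adj v d) :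
    completeBipartiteGraph (Fin 2) (Fin 3) ⊑ H.splitEdge u v := by
  refine ⟨⟨⟨Sum.elim ![some u, some v] ![some c, some d, none], ?_⟩, ?_⟩⟩
  · rintro (i | i) (j | j) h <;> fin_cases i <;> fin_cases j <;>
      simp_all [splitEdge, huc.symm, hud.symm, hvc.symm, hvd.symm, huc.ne', hud.ne', hvc.ne',
        hvd.ne']
  · rintro (i | i) (j | j) h <;> fin_cases i <;> fin_cases j <;>
      simp_all [huc.ne, hud.ne, hvc.ne, hvd.ne, huc.ne', hud.ne', hvc.ne', hvd.ne', huv.symm,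
        hcd.symm]

theorem completeBipartiteGraph_isContained_completeGraph_splitEdge {u v : Fin 4} (huv : u ≠ v) :
    completeBipartiteGraph (Fin 2) (Fin 3) ⊑ (completeGraph (Fin 4)).splitEdge u v := by
  obtain ⟨c, d, hcd, hcu, hcv, hdu, hdv⟩ :
      ∃ c d : Fin 4, c ≠ d ∧ c ≠ u ∧ c ≠ v ∧ d ≠ u ∧ d ≠ v := by
    revert u v; decide
  exact completeBipartiteGraph_isContained_splitEdge huv hcd hcu.symm hdu.symm hcv.symm hdv.symm

end SimpleGraph

theorem stmt_18 {V : Type*} (G : SimpleGraph V) (hbip : G.Colorable 2) :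
    G.Outerplanar ↔ ¬ G.ContainsSubdivision (completeBipartiteGraph (Fin 2) (Fin 3)) := by
  refine ⟨And.right, fun hK₂₃ => ⟨fun hK₄ => ?_, hK₂₃⟩⟩
  rcases hK₄.isContained_or_exists_containsSubdivision_splitEdge with
    hcopy | ⟨u, v, huv, hsplit⟩
  · exact hcopy.not_cliqueFree (hbip.cliqueFree (by norm_num))
  · exact hK₂₃ (SimpleGraph.HasSubdivision.of_isContained hsplit
      (SimpleGraph.completeBipartiteGraph_isContained_completeGraph_splitEdge huv))
end

section
/- Let G_1^s be the bipartite graph consisting of s ≥ 2 pairwise internally disjoint paths of length 3 joining two fixed vertices. Then its permanental polynomial is π(G_1^s, x) = (1 + 1/(x² + s − 1) + s/(x² + 1)) · (x² + s − 1) · (x² + 1)^s. -/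
open Polynomial

/-- The graph `G₁ˢ`: two hub vertices `u = Sum.inl 0` and `v = Sum.inl 1` joined by `s`
pairwise internally disjoint paths of length three `u — (i,0) — (i,1) — v`. -/
def G1 (s : ℕ) : SimpleGraph (Fin 2 ⊕ Fin s × Fin 2) :=
  SimpleGraph.fromRel (fun x y => ∃ i : Fin s,
    (x = Sum.inl 0 ∧ y = Sum.inr (i, 0)) ∨
    (x = Sum.inl 1 ∧ y = Sum.inr (i, 1)) ∨
    (x = Sum.inr (i, 0) ∧ y = Sum.inr (i, 1)))

/-!
Expanding the permanent along the two columns of one path `u – a – b – v` gives six terms: a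
permutation either keeps `{a, b}` to itself (weight `x² + 1`), or routes one or both hubs through
the path, which leaves the graph with one path fewer and a hub row replaced by a unit row. With
the hub block and the hub–path weights left free, this family of matrices is closed under the
expansion, and induction on the number of paths gives a closed form for all of its members.
-/

open Equiv

namespace Matrix

variable {R : Type*} [CommSemiring R]

theorem permanent_submatrix_equiv_self {m n : Type*} [DecidableEq m] [Fintype m] [DecidableEq n]
    [Fintype n] (e : m ≃ n) (M : Matrix n n R) :
    (M.submatrix e e).permanent = M.permanent :=
  Fintype.sum_equiv e.permCongr _ _ fun σ =>
    Fintype.prod_equiv e _ _ fun i => by simp [permCongr_apply]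

theorem permanent_fin_two (M : Matrix (Fin 2) (Fin 2) R) :
    M.permanent = M 0 0 * M 1 1 + M 0 1 * M 1 0 := by
  have hperm : ∀ σ : Perm (Fin 2), σ = 1 ∨ σ = Equiv.swap (0 : Fin 2) 1 := by decide
  rw [permanent, Fintype.sum_eq_add 1 (Equiv.swap (0 : Fin 2) 1) (by decide)
    fun σ hσ => ((hperm σ).elim hσ.1 hσ.2).elim]
  simp [Fin.prod_univ_two, mul_comm]

theorem permanent_option_expand_none {V : Type*} [DecidableEq V] [Fintype V]
    (M : Matrix (Option V) (Option V) R) :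
    M.permanent = M none none * (M.submatrix some some).permanent +
      ∑ r, M (some r) none *
        ((M.submatrix some some).updateRow r fun j => M none (some j)).permanent := by
  rw [permanent, ← Equiv.sum_comp Perm.decomposeOption.symm, Fintype.sum_prod_type,
    Fintype.sum_option]
  congr 1
  · rw [permanent, Finset.mul_sum]
    refine Finset.sum_congr rfl fun σ _ => ?_
    simp [Fintype.prod_option]
  · refine Finset.sum_congr rfl fun r _ => ?_
    rw [permanent, Finset.mul_sum]
    refine Finset.sum_congr rfl fun σ _ => ?_
    rw [Fintype.prod_option]
    simp only [Perm.decomposeOption_symm_apply, Perm.mul_apply, optionCongr_apply, Option.map_none,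
      Option.map_some, swap_apply_left]
    congr 1
    refine Fintype.prod_congr _ _ fun i => ?_
    by_cases h : σ i = r
    · simp [h]
    · simp [h, updateRow_ne, swap_apply_of_ne_of_ne]

theorem submatrix_updateRow_none {α V W U : Type*} [DecidableEq V]
    (M : Matrix (Option V) W α) (f : U → W) (w : W → α) :
    (M.updateRow none w).submatrix some f = M.submatrix some f := by
  ext i j; simp

theorem submatrix_updateRow_some {α V W U : Type*} [DecidableEq V]
    (M : Matrix (Option V) W α) (f : U → W) (r : V) (w : W → α) :
    (M.updateRow (some r) w).submatrix some f = (M.submatrix some f).updateRow r (w ∘ f) := by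
  ext i j; by_cases h : i = r <;> simp [h, updateRow_apply]

/-- `some none` and `none` are the inner vertices `a` and `b` of a path `u – a – b – v` attached
to the graph of `A`; the six terms are the ways a permutation can pass through this ear. -/
theorem permanent_ear {V : Type*} [DecidableEq V] [Fintype V]
    (M : Matrix (Option (Option V)) (Option (Option V)) R) (A : Matrix V V R) {u v : V}
    (huv : u ≠ v) (hA : ∀ i j, M (some (some i)) (some (some j)) = A i j)
    (hcol_b : ∀ i ≠ v, M (some (some i)) none = 0)
    (hcol_a : ∀ i ≠ u, M (some (some i)) (some none) = 0)
    (hrow_b : ∀ j ≠ v, M none (some (some j)) = 0)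
    (hrow_a : ∀ j ≠ u, M (some none) (some (some j)) = 0) :
    M.permanent =
      (M (some none) (some none) * M none none + M (some none) none * M none (some none)) *
          A.permanent
        + M (some (some u)) (some none) * M (some none) (some (some u)) * M none none *
          (A.updateRow u (Pi.single u 1)).permanent
        + M (some (some v)) none * M none (some (some v)) * M (some none) (some none) *
          (A.updateRow v (Pi.single v 1)).permanent
        + M (some (some u)) (some none) * M (some none) (some (some u)) *
            (M (some (some v)) none * M none (some (some v))) *
          ((A.updateRow u (Pi.single u 1)).updateRow v (Pi.single v 1)).permanent
        + M (some (some u)) (some none) * M (some none) none * M none (some (some v)) *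
          (A.updateRow u (Pi.single v 1)).permanent
        + M (some (some v)) none * M none (some none) * M (some none) (some (some u)) *
          (A.updateRow v (Pi.single u 1)).permanent := by
  have hsub : (M.submatrix some some).submatrix some some = A := by ext i j; exact hA i j
  have hrow_b' : (fun j => M none (some (some j))) = M none (some (some v)) • Pi.single v 1 := by
    ext j; by_cases h : j = v <;> simp [h, hrow_b]
  have hrow_a' : (fun j => M (some none) (some (some j))) =
      M (some none) (some (some u)) • Pi.single u 1 := by
    ext j; by_cases h : j = u <;> simp [h, hrow_a]
  have h₀ : (M.submatrix some some).permanent = M (some none) (some none) * A.permanent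
      + M (some (some u)) (some none) * M (some none) (some (some u)) *
        (A.updateRow u (Pi.single u 1)).permanent := by
    rw [permanent_option_expand_none, Fintype.sum_eq_single u fun i hi => by
      simp [hcol_a i hi]]
    simp [hsub, hrow_a', mul_assoc]
  have ha : ((M.submatrix some some).updateRow none fun j => M none (some j)).permanent =
      M none (some none) * A.permanent
      + M (some (some u)) (some none) * M none (some (some v)) *
        (A.updateRow u (Pi.single v 1)).permanent := by
    rw [permanent_option_expand_none, Fintype.sum_eq_single u fun i hi => by
      simp [hcol_a i hi]]
    simp [submatrix_updateRow_none, hsub, hrow_b', mul_assoc]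
  have hv : ((M.submatrix some some).updateRow (some v) fun j => M none (some j)).permanent =
      M (some none) (some none) * M none (some (some v)) *
        (A.updateRow v (Pi.single v 1)).permanent
      + M (some (some u)) (some none) * M (some none) (some (some u)) * M none (some (some v)) *
        ((A.updateRow u (Pi.single u 1)).updateRow v (Pi.single v 1)).permanent
      + M none (some none) * M (some none) (some (some u)) *
        (A.updateRow v (Pi.single u 1)).permanent := by
    rw [permanent_option_expand_none, Fintype.sum_eq_add u v huv fun i hi => by
      simp [hi.2, hcol_a i hi.1]]
    simp only [submatrix_apply, submatrix_updateRow_some, hsub, Function.comp_def,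
      hrow_b', hrow_a', updateRow_self, updateRow_idem, ne_eq, reduceCtorEq, Option.some.injEq,
      huv, not_false_eq_true, updateRow_ne, permanent_updateRow_smul, mul_assoc]
    rw [updateRow_comm _ huv.symm, permanent_updateRow_smul]
    ring
  rw [permanent_option_expand_none M, Fintype.sum_option,
    Fintype.sum_eq_single v fun i hi => by rw [hcol_b i hi, zero_mul], h₀, ha, hv]
  ring

end Matrix

open Matrix Sum Function

section Paths

variable {R : Type*} [CommRing R]

/-- The matrix `x I - A` of `n` paths of length three between the hubs `inl 0` and `inl 1`,
except that the hub block is an arbitrary `P` and the row of hub `k` has entries `-l k` at its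
neighbours, so that replacing a hub row by a unit row stays inside the family. -/
def pathsMatrix (n : ℕ) (x : R) (P : Matrix (Fin 2) (Fin 2) R) (l : Fin 2 → R) :
    Matrix (Fin 2 ⊕ Fin n × Fin 2) (Fin 2 ⊕ Fin n × Fin 2) R :=
  fromBlocks P (of fun k p => if p.2 = k then -l k else 0)
    (of fun p k => if p.2 = k then -1 else 0)
    (of fun p q => if p.1 = q.1 then if p.2 = q.2 then x else -1 else 0)

def pathsSuccEquiv (n : ℕ) :
    Option (Option (Fin 2 ⊕ Fin n × Fin 2)) ≃ Fin 2 ⊕ Fin (n + 1) × Fin 2 where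
  toFun
    | none => inr (0, 1)
    | some none => inr (0, 0)
    | some (some (inl k)) => inl k
    | some (some (inr (i, k))) => inr (i.succ, k)
  invFun
    | inl k => some (some (inl k))
    | inr (i, k) =>
      Fin.cases (if k = 0 then some none else none) (fun i => some (some (inr (i, k)))) i
  left_inv := by
    rintro (_ | _ | k | ⟨i, k⟩) <;> simp
  right_inv := by
    rintro (k | ⟨i, k⟩)
    · rfl
    · induction i using Fin.cases <;> fin_cases k <;> rfl

theorem pathsMatrix_updateRow_hub (n : ℕ) (x : R) (P : Matrix (Fin 2) (Fin 2) R) (l : Fin 2 → R)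
    (k c : Fin 2) :
    (pathsMatrix n x P l).updateRow (inl k) (Pi.single (inl c) 1) =
      pathsMatrix n x (P.updateRow k (Pi.single c 1)) (update l k 0) := by
  ext (i | ⟨i, a⟩) (j | ⟨j, b⟩) <;>
    simp only [pathsMatrix, updateRow_apply, Pi.single_apply, update_apply, of_apply,
      fromBlocks_apply₁₁, fromBlocks_apply₁₂, fromBlocks_apply₂₁, fromBlocks_apply₂₂, inl.injEq,
      reduceCtorEq] <;>
    split_ifs <;> simp_all

theorem permanent_pathsMatrix_succ (n : ℕ) (x : R) (P : Matrix (Fin 2) (Fin 2) R)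
    (l : Fin 2 → R) :
    (pathsMatrix (n + 1) x P l).permanent =
      (x * x + 1) * (pathsMatrix n x P l).permanent
        + l 0 * x * (pathsMatrix n x (P.updateRow 0 (Pi.single 0 1)) (update l 0 0)).permanent
        + l 1 * x * (pathsMatrix n x (P.updateRow 1 (Pi.single 1 1)) (update l 1 0)).permanent
        + l 0 * l 1 * (pathsMatrix n x
            ((P.updateRow 0 (Pi.single 0 1)).updateRow 1 (Pi.single 1 1))
            (update (update l 0 0) 1 0)).permanent
        - l 0 * (pathsMatrix n x (P.updateRow 0 (Pi.single 1 1)) (update l 0 0)).permanent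
        - l 1 * (pathsMatrix n x (P.updateRow 1 (Pi.single 0 1)) (update l 1 0)).permanent := by
  rw [← permanent_submatrix_equiv_self (pathsSuccEquiv n),
    permanent_ear _ (pathsMatrix n x P l) (u := inl 0) (v := inl 1) (by simp)]
  · simp only [pathsMatrix_updateRow_hub]
    simp only [pathsMatrix, pathsSuccEquiv, coe_fn_mk, submatrix_apply, of_apply,
      fromBlocks_apply₁₂, fromBlocks_apply₂₁, fromBlocks_apply₂₂, ↓reduceIte, zero_ne_one,
      one_ne_zero]
    ring
  case hA => rintro (k | ⟨i, k⟩) <;> simp [pathsSuccEquiv, pathsMatrix]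
  all_goals rintro (k | ⟨i, k⟩) hk <;> simp_all [pathsSuccEquiv, pathsMatrix, eq_comm]

theorem permanent_pathsMatrix_zero (x : R) (P : Matrix (Fin 2) (Fin 2) R) (l : Fin 2 → R) :
    (pathsMatrix 0 x P l).permanent = P.permanent := by
  rw [← permanent_submatrix_equiv_self (Equiv.sumEmpty (Fin 2) (Fin 0 × Fin 2)).symm]
  rfl

theorem permanent_pathsMatrix (n : ℕ) (x : R) (P : Matrix (Fin 2) (Fin 2) R) (l : Fin 2 → R) :
    (pathsMatrix n x P l).permanent =
      (P 0 0 * P 1 1 + P 0 1 * P 1 0) * (x ^ 2 + 1) ^ n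
        + n * (x ^ 2 + 1) ^ (n - 1) *
          (x * (P 0 0 * l 1 + P 1 1 * l 0) - (P 0 1 * l 1 + P 1 0 * l 0) + n * l 0 * l 1) := by
  induction n generalizing P l with
  | zero => simp [permanent_pathsMatrix_zero, permanent_fin_two]
  | succ n ih =>
    rw [permanent_pathsMatrix_succ]
    simp only [ih, updateRow_apply, ↓reduceIte, one_ne_zero, zero_ne_one, Pi.single_eq_same,
      ne_eq, not_false_eq_true, Pi.single_eq_of_ne, update_self, update_of_ne, Nat.cast_add,
      Nat.cast_one, add_tsub_cancel_right]
    rcases n with _ | n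
    · simp only [Nat.cast_zero, zero_tsub]
      ring
    · push_cast [Nat.add_sub_cancel]
      ring

end Paths

theorem charmatrix_adjMatrix_G1 {R : Type*} [CommRing R] (s : ℕ) [DecidableRel (G1 s).Adj] :
    ((G1 s).adjMatrix R).charmatrix = pathsMatrix s X (diagonal fun _ => X) 1 := by
  refine Matrix.ext fun a b => ?_
  rcases a with k | ⟨i, k⟩ <;> rcases b with k' | ⟨j, k'⟩ <;> fin_cases k <;> fin_cases k' <;>
    simp only [charmatrix_apply, SimpleGraph.adjMatrix_apply] <;>
    simp [G1, pathsMatrix, diagonal_apply, neg_ite, eq_comm]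

open scoped Classical in
theorem stmt_19_general (s : ℕ) :
    Matrix.permanent ((G1 s).adjMatrix ℤ).charmatrix
      = (X ^ 2 + (s : Polynomial ℤ) - 1) * (X ^ 2 + 1) ^ s + (X ^ 2 + 1) ^ s
        + (s : Polynomial ℤ) * (X ^ 2 + (s : Polynomial ℤ) - 1) * (X ^ 2 + 1) ^ (s - 1) := by
  rw [charmatrix_adjMatrix_G1, permanent_pathsMatrix]
  simp only [diagonal_apply_eq, diagonal_apply_ne _ zero_ne_one, diagonal_apply_ne _ one_ne_zero,
    Pi.one_apply]
  cases s with
  | zero => simp only [Nat.cast_zero]; ring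
  | succ s => push_cast [Nat.add_sub_cancel]; ring

open scoped Classical in
/-- The permanental polynomial of `G₁ˢ` is
`(1 + 1/(x² + s - 1) + s/(x² + 1)) (x² + s - 1) (x² + 1)ˢ`, written with denominators
cleared as `(x² + s - 1)(x² + 1)ˢ + (x² + 1)ˢ + s (x² + s - 1)(x² + 1)^(s-1)`. -/
theorem stmt_19 (s : ℕ) (hs : 2 ≤ s) :
    Matrix.permanent ((G1 s).adjMatrix ℤ).charmatrix
      = (X ^ 2 + (s : Polynomial ℤ) - 1) * (X ^ 2 + 1) ^ s + (X ^ 2 + 1) ^ s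
        + (s : Polynomial ℤ) * (X ^ 2 + (s : Polynomial ℤ) - 1) * (X ^ 2 + 1) ^ (s - 1) :=
  stmt_19_general s
end
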